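/- arXiv:1706.01240 — 7 statements merged into one kernel-verified Lean document; each statement's English description precedes it below -/
import Mathlib

section
/- Consider a latent class model with M > 2 latent classes and J binary items, where p_{jα} = P(Y^j = 1 | α). Assume: (A1) there exist three pairwise disjoint subsets I₁, I₂, I₃ of the items such that for every pair of distinct classes α₁ ≠ α₂ and each l = 1, 2, 3, the conditional joint distributions of the responses (Y^j : j ∈ I_l) under class α₁ and under class α₂ are distinct; (A2) for each item j ∈ I₁ ∪ I₂ ∪ I₃, the values p_{jα}, α = 1,…,M, take exactly two distinct values; (A3) π_α > 0 for every class α. Then the item response probabilities p_{jα} for all items j = 1,…,J and the class proportions π_α are identifiable up to a permutation of the class labels. -/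
/-!
For an item taking only two values, a suitable affine function of `p j α`, i.e. the mean
`E[g(Yʲ)]` of some test `g : Bool → ℝ`, is the indicator of `p j α = p j β`; by (A1) the product
of these over a block `I l` is the indicator of `α = β`. Means of products of tests on disjoint
items depend only on the marginal law, so the same tests read in the alternative model give
three matrices `A l α β` with `∑ α, π' α ∏_{l ∈ s} A l α (β l) = π β · [all β l equal]` for
every set `s` of blocks. The pairwise identities `(A l)ᵀ diag π' (A l') = diag π` force the three
matrices to coincide and to be invertible; the triple identity then makes every slice
`Aᵀ diag (π' ⬝ A·β) A` of rank one, so each column of `A` has a single nonzero entry, equal to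
`1`, which defines the permutation. Testing a block that misses item `j` jointly with `Yʲ`
finally gives `π β · p j β = π β · p' j (σ β)`.
-/

open Finset Matrix Function

def bernoulliMean (q : ℝ) (g : Bool → ℝ) : ℝ :=
  ∑ b, g b * if b then q else 1 - q

lemma bernoulliMean_eq (q : ℝ) (g : Bool → ℝ) :
    bernoulliMean q g = g true * q + g false * (1 - q) := by
  simp [bernoulliMean]

@[simp]
lemma bernoulliMean_one (q : ℝ) : bernoulliMean q 1 = 1 := by
  simp [bernoulliMean_eq]

-- The affine map `t ↦ (t - c) / (f x₀ - c)` is `1` at `f x₀` and `0` at the other value `c`,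
-- and every affine map of `q` is a Bernoulli mean.
lemma exists_bernoulliMean_eq_indicator {κ : Type*} (f : κ → ℝ) {a b : ℝ}
    (hab : ∀ x, f x = a ∨ f x = b) (x₀ : κ) :
    ∃ g : Bool → ℝ, ∀ x, bernoulliMean (f x) g = if f x = f x₀ then 1 else 0 := by
  obtain ⟨c, hc⟩ : ∃ c, ∀ x, f x = f x₀ ∨ f x = c := by
    rcases hab x₀ with h₀ | h₀
    · exact ⟨b, fun x => h₀ ▸ hab x⟩
    · exact ⟨a, fun x => h₀ ▸ (hab x).symm⟩
  by_cases hc₀ : f x₀ = c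
  · refine ⟨1, fun x => ?_⟩
    have hx : f x = f x₀ := (hc x).elim id (·.trans hc₀.symm)
    simp [hx]
  · have hd : f x₀ - c ≠ 0 := sub_ne_zero.mpr hc₀
    refine ⟨fun b => if b then (1 - c) / (f x₀ - c) else -c / (f x₀ - c), fun x => ?_⟩
    simp only [bernoulliMean_eq, if_true, Bool.false_eq_true, if_false]
    rcases hc x with hx | hx
    · rw [if_pos hx, hx]
      field_simp
      ring
    · rw [if_neg (hx ▸ Ne.symm hc₀), hx]
      field_simp
      ring

lemma exists_prod_bernoulliMean_eq_indicator {ι κ : Type*} [DecidableEq κ] (S : Finset ι)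
    (p : ι → κ → ℝ) (htwo : ∀ j ∈ S, ∃ a b, ∀ α, p j α = a ∨ p j α = b)
    (hsep : ∀ α β, α ≠ β → ∃ j ∈ S, p j α ≠ p j β) (β : κ) :
    ∃ w : ι → Bool → ℝ, ∀ α, ∏ j ∈ S, bernoulliMean (p j α) (w j) = if α = β then 1 else 0 := by
  have hitem : ∀ j, ∃ g : Bool → ℝ, j ∈ S →
      ∀ α, bernoulliMean (p j α) g = if p j α = p j β then 1 else 0 := by
    intro j
    by_cases hj : j ∈ S
    · obtain ⟨a, b, hab⟩ := htwo j hj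
      obtain ⟨g, hg⟩ := exists_bernoulliMean_eq_indicator (p j) hab β
      exact ⟨g, fun _ => hg⟩
    · exact ⟨1, fun h => absurd h hj⟩
  choose w hw using hitem
  refine ⟨w, fun α => ?_⟩
  rw [prod_congr rfl fun j hj => hw j hj α]
  split_ifs with h
  · simp [h]
  · obtain ⟨j, hj, hne⟩ := hsep α β h
    exact prod_eq_zero hj (if_neg hne)

section Mixture

variable {ι κ : Type*} [Fintype ι] [DecidableEq ι] [Fintype κ]

def mixtureProb (p : ι → κ → ℝ) (π : κ → ℝ) (y : ι → Bool) : ℝ :=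
  ∑ α, π α * ∏ j, if y j then p j α else 1 - p j α

lemma sum_mul_prod_bernoulliMean (p : ι → κ → ℝ) (π : κ → ℝ) (u : ι → Bool → ℝ) :
    ∑ α, π α * ∏ j, bernoulliMean (p j α) (u j)
      = ∑ y : ι → Bool, (∏ j, u j (y j)) * mixtureProb p π y := by
  simp only [bernoulliMean, Fintype.prod_sum, prod_mul_distrib, mixtureProb, mul_sum]
  rw [sum_comm]
  exact sum_congr rfl fun _ _ => sum_congr rfl fun _ _ => by ring

variable {p p' : ι → κ → ℝ} {π π' : κ → ℝ}

lemma sum_mul_prod_prod_bernoulliMean_eq {L : Type*} {I : L → Finset ι}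
    (hI : Pairwise (Disjoint on I)) (hQ : ∀ y, mixtureProb p π y = mixtureProb p' π' y)
    (s : Finset L) (W : L → ι → Bool → ℝ) :
    ∑ α, π α * ∏ l ∈ s, ∏ j ∈ I l, bernoulliMean (p j α) (W l j)
      = ∑ α, π' α * ∏ l ∈ s, ∏ j ∈ I l, bernoulliMean (p' j α) (W l j) := by
  set u : ι → Bool → ℝ := fun j => ∏ l ∈ s, (I l).piecewise (W l) 1 j
  have hu_mem : ∀ l ∈ s, ∀ j ∈ I l, u j = W l j := fun l hl j hj =>
    (prod_eq_single_of_mem l hl fun l' _ hl' =>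
      piecewise_eq_of_notMem _ _ _ (disjoint_left.mp (hI hl'.symm) hj)).trans
      (piecewise_eq_of_mem _ _ _ hj)
  have hu_out : ∀ j ∉ s.biUnion I, u j = 1 := fun j hj =>
    prod_eq_one fun l hl => piecewise_eq_of_notMem _ _ _ fun hjl => hj (mem_biUnion.mpr ⟨l, hl, hjl⟩)
  have hfactor : ∀ q : ι → κ → ℝ, ∀ α, ∏ j, bernoulliMean (q j α) (u j)
      = ∏ l ∈ s, ∏ j ∈ I l, bernoulliMean (q j α) (W l j) := fun q α => by
    rw [← prod_subset (subset_univ _) fun j _ hj => by rw [hu_out j hj, bernoulliMean_one],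
      prod_biUnion (hI.set_pairwise _)]
    exact prod_congr rfl fun l hl => prod_congr rfl fun j hj => by rw [hu_mem l hl j hj]
  simp only [← hfactor, sum_mul_prod_bernoulliMean, hQ]

lemma sum_mul_prod_bernoulliMean_mul_eq (hQ : ∀ y, mixtureProb p π y = mixtureProb p' π' y)
    {S : Finset ι} {j : ι} (hj : j ∉ S) (w : ι → Bool → ℝ) :
    ∑ α, π α * (∏ i ∈ S, bernoulliMean (p i α) (w i)) * p j α
      = ∑ α, π' α * (∏ i ∈ S, bernoulliMean (p' i α) (w i)) * p' j α := by
  have hI : Pairwise (Disjoint on ![S, {j}]) := by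
    intro a b hab
    fin_cases a <;> fin_cases b <;> simp_all [onFun]
  have h := sum_mul_prod_prod_bernoulliMean_eq hI hQ univ ![w, fun _ b => if b then 1 else 0]
  simpa [Fin.prod_univ_two, bernoulliMean_eq, mul_assoc] using h

end Mixture

section Tensor

variable {κ K : Type*} [Fintype κ] [DecidableEq κ] [Field K]

lemma Matrix.transpose_mul_diagonal_mul_apply (A B : Matrix κ κ K) (d : κ → K) (β γ : κ) :
    (Aᵀ * diagonal d * B) β γ = ∑ α, d α * A α β * B α γ := by
  rw [mul_apply]
  simp only [mul_diagonal, transpose_apply]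
  exact sum_congr rfl fun α _ => by ring

lemma Matrix.rank_single_le_one (β γ : κ) (c : K) : (single β γ c).rank ≤ 1 := by
  rw [show single β γ c = vecMulVec (Pi.single β c) (Pi.single γ 1) by
    ext i j
    by_cases hi : i = β <;> by_cases hj : j = γ <;> simp_all [single, vecMulVec, eq_comm]]
  exact rank_vecMulVec_le _ _

theorem exists_perm_of_transpose_mul_diagonal_mul_eq {A : Matrix κ κ K} {d π : κ → K}
    (hπ : ∀ β, π β ≠ 0) (h2 : Aᵀ * diagonal d * A = diagonal π)
    (h3 : ∀ β, Aᵀ * diagonal (fun α => d α * A α β) * A = single β β (π β)) :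
    ∃ σ : Equiv.Perm κ, ∀ β, d (σ β) = π β ∧ ∀ α, A α β = if α = σ β then 1 else 0 := by
  classical
  have hunit : IsUnit (Aᵀ * diagonal d * A) :=
    h2 ▸ isUnit_diagonal.mpr (Pi.isUnit_iff.mpr fun β => (hπ β).isUnit)
  have hA : IsUnit A.det := (isUnit_iff_isUnit_det A).mp (isUnit_of_mul_isUnit_right hunit)
  have hAt : IsUnit Aᵀ.det :=
    (isUnit_iff_isUnit_det _).mp (isUnit_of_mul_isUnit_left (isUnit_of_mul_isUnit_left hunit))
  have hd : ∀ α, d α ≠ 0 := fun α => (Pi.isUnit_iff.mp (isUnit_diagonal.mp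
    (isUnit_of_mul_isUnit_right (isUnit_of_mul_isUnit_left hunit))) α).ne_zero
  have h2' : ∀ β γ, ∑ α, d α * A α β * A α γ = if β = γ then π β else 0 := fun β γ => by
    rw [← Matrix.transpose_mul_diagonal_mul_apply, h2, diagonal_apply]
  -- `A` is invertible, so `diag (d ⬝ A·β)` has the rank of the rank-one slice `h3 β`.
  have hslice : ∀ β, ∃ α₀, ∀ α, A α β ≠ 0 ↔ α = α₀ := by
    intro β
    have hrank : Fintype.card {α // d α * A α β ≠ 0} ≤ 1 := by
      rw [← rank_diagonal, ← rank_mul_eq_left_of_isUnit_det _ _ hA,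
        ← rank_mul_eq_right_of_isUnit_det _ _ hAt, ← Matrix.mul_assoc, h3 β]
      exact Matrix.rank_single_le_one _ _ _
    obtain ⟨α₀, hα₀⟩ : ∃ α₀, d α₀ * A α₀ β ≠ 0 := by
      by_contra! h
      have := h2' β β
      simp only [h, zero_mul, sum_const_zero, if_true] at this
      exact hπ β this.symm
    refine ⟨α₀, fun α => ⟨fun hα => ?_, fun h => h ▸ right_ne_zero_of_mul hα₀⟩⟩
    exact congrArg Subtype.val
      (Fintype.card_le_one_iff.mp hrank ⟨α, mul_ne_zero (hd α) hα⟩ ⟨α₀, hα₀⟩)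
  choose σ₀ hσ₀ using hslice
  have hzero : ∀ β α, α ≠ σ₀ β → A α β = 0 := fun β α h => not_not.mp (mt (hσ₀ β α).mp h)
  have hconc : ∀ β (X : κ → K), ∑ α, d α * A α β * X α = d (σ₀ β) * A (σ₀ β) β * X (σ₀ β) :=
    fun β X => sum_eq_single _ (fun α _ h => by rw [hzero β α h]; ring) (by simp)
  have hdiag : ∀ β, d (σ₀ β) * A (σ₀ β) β * A (σ₀ β) β = π β := fun β => by
    rw [← hconc β fun α => A α β, h2', if_pos rfl]
  have hone : ∀ β, A (σ₀ β) β = 1 := by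
    intro β
    have h : ∑ α, d α * A α β * (A α β * A α β) = π β := by
      rw [← single_apply_same β β (π β), ← h3 β, Matrix.transpose_mul_diagonal_mul_apply]
      exact sum_congr rfl fun α _ => by ring
    rw [hconc β fun α => A α β * A α β] at h
    apply mul_left_cancel₀ (hπ β)
    linear_combination h - A (σ₀ β) β * hdiag β
  have hinj : Injective σ₀ := by
    intro β γ hβγ
    by_contra hne
    have h := h2' β γ
    rw [if_neg hne, hconc β fun α => A α γ, hone, hβγ, hone, mul_one, mul_one] at h
    exact hd _ h
  refine ⟨Equiv.ofBijective σ₀ (Finite.injective_iff_bijective.mp hinj), fun β => ⟨?_, fun α => ?_⟩⟩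
  · simpa [hone] using hdiag β
  · split_ifs with h
    · exact h ▸ hone β
    · exact hzero β α h

theorem exists_perm_of_sum_mul_prod_eq (A : Fin 3 → Matrix κ κ K) {d π : κ → K}
    (hπ : ∀ β, π β ≠ 0)
    (hT : ∀ (s : Finset (Fin 3)) (β : Fin 3 → κ),
      ∑ α, d α * ∏ l ∈ s, A l α (β l) = ∑ α, π α * ∏ l ∈ s, if α = β l then 1 else 0) :
    ∃ σ : Equiv.Perm κ, ∀ β, d (σ β) = π β ∧ ∀ l α, A l α β = if α = σ β then 1 else 0 := by
  have hdiagπ : IsUnit (diagonal π) := isUnit_diagonal.mpr (Pi.isUnit_iff.mpr fun β => (hπ β).isUnit)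
  have hpair : ∀ l l', l ≠ l' → (A l)ᵀ * diagonal d * A l' = diagonal π := by
    intro l l' hll'
    ext β γ
    have h := hT {l, l'} fun k => if k = l then β else γ
    simp only [prod_pair hll', ↓reduceIte, hll'.symm] at h
    rw [Matrix.transpose_mul_diagonal_mul_apply, diagonal_apply]
    simp only [mul_assoc]
    rw [h, sum_eq_single β (fun α _ hα => by simp [hα]) (by simp)]
    by_cases hγ : β = γ <;> simp [hγ]
  have h01 := hpair 0 1 (by decide)
  have h02 := hpair 0 2 (by decide)
  have h12 := hpair 1 2 (by decide)
  have hA12 : A 1 = A 2 := (isUnit_of_mul_isUnit_left (h01 ▸ hdiagπ)).mul_left_cancel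
    (h01.trans h02.symm)
  have hA01 : A 0 = A 1 := by
    have hY : IsUnit (diagonal d * A 2) := isUnit_of_mul_isUnit_right (x := (A 0)ᵀ) <| by
      rw [← Matrix.mul_assoc, h02]
      exact hdiagπ
    refine transpose_inj.mp (hY.mul_right_cancel ?_)
    rw [← Matrix.mul_assoc, ← Matrix.mul_assoc, h02, h12]
  have hA : ∀ l, A l = A 0 := by
    intro l
    fin_cases l <;> simp [hA01, hA12]
  rw [← hA01] at h01
  obtain ⟨σ, hσ⟩ := exists_perm_of_transpose_mul_diagonal_mul_eq hπ h01 fun β => by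
    ext γ δ
    have h := hT univ ![β, γ, δ]
    simp only [Fin.prod_univ_three, hA, Matrix.cons_val_zero, Matrix.cons_val_one,
      Matrix.cons_val_two, Matrix.head_cons, Matrix.tail_cons] at h
    rw [Matrix.transpose_mul_diagonal_mul_apply, single, of_apply]
    simp only [mul_assoc] at h ⊢
    rw [h, sum_eq_single β (fun α _ hα => by simp [hα]) (by simp)]
    by_cases hγ : β = γ <;> by_cases hδ : β = δ <;> simp [hγ, hδ]
  exact ⟨σ, fun β => ⟨(hσ β).1, fun l α => hA l ▸ (hσ β).2 α⟩⟩

end Tensor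

theorem latent_class_binary_identifiability_general
    (M J : ℕ)
    (p : Fin J → Fin M → ℝ) (π : Fin M → ℝ)
    (I : Fin 3 → Finset (Fin J))
    (hdisj : ∀ l l' : Fin 3, l ≠ l' → Disjoint (I l) (I l'))
    (hA1 : ∀ l : Fin 3, ∀ α₁ α₂ : Fin M, α₁ ≠ α₂ →
      ∃ y : Fin J → Bool,
        (∏ j ∈ I l, (if y j then p j α₁ else 1 - p j α₁)) ≠
        (∏ j ∈ I l, (if y j then p j α₂ else 1 - p j α₂)))
    (hA2 : ∀ j ∈ I 0 ∪ I 1 ∪ I 2, (Set.range (p j)).ncard = 2)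
    (hA3 : ∀ α, 0 < π α) :
    ∀ (p' : Fin J → Fin M → ℝ) (π' : Fin M → ℝ),
      (∀ j α, 0 ≤ p' j α ∧ p' j α ≤ 1) →
      (∀ α, 0 ≤ π' α) → (∑ α, π' α = 1) →
      (∀ y : Fin J → Bool,
        ∑ α, π α * ∏ j, (if y j then p j α else 1 - p j α) =
        ∑ α, π' α * ∏ j, (if y j then p' j α else 1 - p' j α)) →
      ∃ σ : Equiv.Perm (Fin M),
        (∀ j α, p' j (σ α) = p j α) ∧ (∀ α, π' (σ α) = π α) := by
  intro p' π' _ _ _ hQ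
  have htwo : ∀ l, ∀ j ∈ I l, ∃ a b, ∀ α, p j α = a ∨ p j α = b := by
    intro l j hj
    obtain ⟨a, b, -, hab⟩ := Set.ncard_eq_two.mp (hA2 j (by fin_cases l <;> simp_all))
    exact ⟨a, b, fun α => by simpa [hab] using Set.mem_range_self (f := p j) α⟩
  have hsep : ∀ l α β, α ≠ β → ∃ j ∈ I l, p j α ≠ p j β := by
    intro l α β hαβ
    obtain ⟨y, hy⟩ := hA1 l α β hαβ
    by_contra! h
    exact hy (prod_congr rfl fun j hj => by rw [h j hj])
  choose w hw using fun l => exists_prod_bernoulliMean_eq_indicator (I l) p (htwo l) (hsep l)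
  obtain ⟨σ, hσ⟩ := exists_perm_of_sum_mul_prod_eq
    (fun l => of fun α β => ∏ j ∈ I l, bernoulliMean (p' j α) (w l β j))
    (fun α => (hA3 α).ne') fun s β => by
      simpa [hw] using (sum_mul_prod_prod_bernoulliMean_eq hdisj hQ s fun l => w l (β l)).symm
  refine ⟨σ, fun j β => ?_, fun β => (hσ β).1⟩
  obtain ⟨l, hjl⟩ : ∃ l, j ∉ I l := by
    by_contra! h
    exact disjoint_left.mp (hdisj 0 1 (by decide)) (h 0) (h 1)
  have h := sum_mul_prod_bernoulliMean_mul_eq hQ hjl (w l β)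
  have hA : ∀ α, ∏ i ∈ I l, bernoulliMean (p' i α) (w l β i) = if α = σ β then 1 else 0 :=
    (hσ β).2 l
  simp only [hw, hA, mul_ite, mul_one, mul_zero, ite_mul, zero_mul, sum_ite_eq', mem_univ,
    if_true, (hσ β).1] at h
  exact (mul_left_cancel₀ (hA3 β).ne' h).symm

/-- **Identifiability of the binary latent class model with two-valued items
(Theorem 1).**
There are `M > 2` latent classes and `J` binary items, with conditional positive
response probabilities `p j α = P(Y^j = 1 | α)` and class proportions `π`.
Assume:
(A1) there are three pairwise disjoint subsets `I 0, I 1, I 2` of the items such that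
for any two distinct classes the conditional joint distributions of the responses on
each subset differ;
(A2) for each item `j` in the union of the three subsets, `p j ·` takes exactly two
distinct values;
(A3) `π α > 0` for every class.
Then the item response probabilities (for all items) and the class proportions are
identifiable up to a permutation of the class labels. -/
theorem latent_class_binary_identifiability
    (M J : ℕ) (hM : M > 2)
    (p : Fin J → Fin M → ℝ) (π : Fin M → ℝ)
    (hp : ∀ j α, 0 ≤ p j α ∧ p j α ≤ 1)
    (hπ0 : ∀ α, 0 ≤ π α) (hπ1 : ∑ α, π α = 1)
    (I : Fin 3 → Finset (Fin J))
    (hdisj : ∀ l l' : Fin 3, l ≠ l' → Disjoint (I l) (I l'))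
    (hA1 : ∀ l : Fin 3, ∀ α₁ α₂ : Fin M, α₁ ≠ α₂ →
      ∃ y : Fin J → Bool,
        (∏ j ∈ I l, (if y j then p j α₁ else 1 - p j α₁)) ≠
        (∏ j ∈ I l, (if y j then p j α₂ else 1 - p j α₂)))
    (hA2 : ∀ j ∈ I 0 ∪ I 1 ∪ I 2, (Set.range (p j)).ncard = 2)
    (hA3 : ∀ α, 0 < π α) :
    ∀ (p' : Fin J → Fin M → ℝ) (π' : Fin M → ℝ),
      (∀ j α, 0 ≤ p' j α ∧ p' j α ≤ 1) →
      (∀ α, 0 ≤ π' α) → (∑ α, π' α = 1) →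
      (∀ y : Fin J → Bool,
        ∑ α, π α * ∏ j, (if y j then p j α else 1 - p j α) =
        ∑ α, π' α * ∏ j, (if y j then p' j α else 1 - p' j α)) →
      ∃ σ : Equiv.Perm (Fin M),
        (∀ j α, p' j (σ α) = p j α) ∧ (∀ α, π' (σ α) = π α) :=
  latent_class_binary_identifiability_general M J p π I hdisj hA1 hA2 hA3
end

section
/- Consider a diagnostic classification model for J binary items with K binary attributes: the latent classes are the attribute profiles α = (α₁,…,α_K) ∈ {0,1}^K, with class proportions π_α and conditional positive response probabilities p_{jα} ∈ [0,1]. Suppose there are three pairwise disjoint sets of K items each such that, for every attribute k = 1,…,K, each of the three sets contains an item j for which p_{jα} depends on α only through α_k and takes two distinct values (its value when α_k = 0 differs from its value when α_k = 1); this corresponds to the Q-matrix containing three distinct K×K identity submatrices after rearranging rows and columns. Assume π_α > 0 for every α ∈ {0,1}^K. Then the item response probabilities p_{jα} for all items and the class proportions π_α are identifiable up to a permutation of the class labels. -/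
/-!
The moments `∑ α, π α * ∏ j ∈ T, p j α` are linear combinations of the marginal
probabilities. Letting `T` range over the unions of a subset of the first identity block, a
subset of the second one and a fixed set `S` of other items, they form the matrix
`Aᵀ * diagonal (π * ∏ j ∈ S, p j) * B`, where `A` and `B` (rows: classes, columns: subsets of
attributes) are Kronecker products of the invertible `2 × 2` matrices `[[1, p_k(0)], [1, p_k(1)]]`.
Equal marginals make it equal to the matrix `A'ᵀ * diagonal (π' * ∏ j ∈ S, p' j) * B'` built
from `(p', π')`, so `U = A'ᵀ⁻¹ * Aᵀ` satisfies `U * diagonal (p j) = diagonal (p' j) * U` for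
every item `j` outside the first two blocks. The items of the third block separate the classes,
which forces `U` to be a permutation matrix up to scaling; the column of the empty subset fixes
the scaling.
-/

open Finset Matrix Function

namespace Matrix

section PiKronecker

variable {R : Type*} [CommRing R] {ι : Type*} [Fintype ι] {l m o : Type*}

def piKronecker (M : ι → Matrix l m R) : Matrix (ι → l) (ι → m) R :=
  of fun α u => ∏ k, M k (α k) (u k)

theorem piKronecker_mul [DecidableEq ι] [Fintype m] (M : ι → Matrix l m R)
    (N : ι → Matrix m o R) :
    piKronecker M * piKronecker N = piKronecker fun k => M k * N k := by
  ext α β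
  simp only [piKronecker, mul_apply, of_apply, ← prod_mul_distrib]
  exact (Fintype.prod_sum fun k b => M k (α k) b * N k b (β k)).symm

theorem piKronecker_one [DecidableEq l] : piKronecker (fun _ : ι => (1 : Matrix l l R)) = 1 := by
  ext α β
  by_cases h : α = β
  · subst h
    simp [piKronecker]
  · obtain ⟨k, hk⟩ := Function.ne_iff.mp h
    rw [one_apply_ne h]
    exact prod_eq_zero (mem_univ k) (one_apply_ne hk)

theorem isUnit_det_piKronecker [DecidableEq ι] [Fintype l] [DecidableEq l]
    (M : ι → Matrix l l R) (hM : ∀ k, IsUnit (M k).det) : IsUnit (piKronecker M).det := by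
  apply isUnit_det_of_right_inverse (B := piKronecker fun k => (M k)⁻¹)
  rw [piKronecker_mul, ← piKronecker_one]
  congr 1
  funext k
  exact mul_nonsing_inv _ (hM k)

end PiKronecker

section Uniqueness

variable {R : Type*} [Field R] {n : Type*} [Fintype n] [DecidableEq n]

theorem eq_of_mul_diagonal_eq_diagonal_mul {U : Matrix n n R} {c c' : n → R}
    (h : U * diagonal c = diagonal c' * U) {α β : n} (hU : U β α ≠ 0) : c α = c' β := by
  have hβα := congrFun (congrFun h β) α
  rw [mul_diagonal, diagonal_mul] at hβα
  exact mul_left_cancel₀ hU (hβα.trans (mul_comm _ _))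

theorem exists_perm_ne_zero_iff_of_isUnit_det {U : Matrix n n R} (hU : IsUnit U.det)
    (hrow : ∀ β α₁ α₂, U β α₁ ≠ 0 → U β α₂ ≠ 0 → α₁ = α₂) :
    ∃ σ : Equiv.Perm n, ∀ α β, U β α ≠ 0 ↔ β = σ α := by
  have hcol : ∀ α, ∃ β, U β α ≠ 0 := by
    intro α
    by_contra! h
    exact hU.ne_zero (det_eq_zero_of_column_eq_zero α h)
  choose r hr using hcol
  have hr_inj : Injective r := fun α₁ α₂ h => hrow _ _ _ (hr α₁) (h ▸ hr α₂)
  refine ⟨Equiv.ofBijective r hr_inj.bijective_of_finite, fun α β => ⟨fun h => ?_, ?_⟩⟩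
  · obtain ⟨α', rfl⟩ := hr_inj.bijective_of_finite.2 β
    simp [hrow _ _ _ h (hr α')]
  · rintro rfl
    exact hr α

variable {A B A' B' : Matrix n n R} {π π' : n → R} {ι : Type*} {c c' : ι → n → R}

theorem exists_conj_of_transpose_mul_diagonal_mul_eq (hA : IsUnit A.det) (hB : IsUnit B.det)
    (hπ : ∀ α, π α ≠ 0) (h₀ : Aᵀ * diagonal π * B = A'ᵀ * diagonal π' * B')
    (h : ∀ i, Aᵀ * diagonal (π * c i) * B = A'ᵀ * diagonal (π' * c' i) * B') :
    ∃ U : Matrix n n R, IsUnit U.det ∧ A'ᵀ * U = Aᵀ ∧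
      diagonal π' * B' = U * (diagonal π * B) ∧ ∀ i, U * diagonal (c i) = diagonal (c' i) * U := by
  have hdiag : ∀ d₁ d₂ : n → R, diagonal (d₁ * d₂) = diagonal d₁ * diagonal d₂ :=
    fun _ _ => (diagonal_mul_diagonal _ _).symm
  have hπB : IsUnit (diagonal π * B) := by
    rw [isUnit_iff_isUnit_det, det_mul, det_diagonal]
    exact (isUnit_iff_ne_zero.mpr (prod_ne_zero_iff.mpr fun α _ => hπ α)).mul hB
  have hAt : IsUnit Aᵀ.det := by rwa [det_transpose]
  have hA't : IsUnit A'ᵀ.det := by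
    have hM := (isUnit_iff_isUnit_det _).mp (((isUnit_iff_isUnit_det _).mpr hAt).mul hπB)
    rw [← mul_assoc, h₀, det_mul, det_mul] at hM
    exact isUnit_of_mul_isUnit_left (isUnit_of_mul_isUnit_left hM)
  have hA'tu : IsUnit A'ᵀ := (isUnit_iff_isUnit_det _).mpr hA't
  set U := A'ᵀ⁻¹ * Aᵀ
  have hU : A'ᵀ * U = Aᵀ := mul_nonsing_inv_cancel_left _ _ hA't
  have hπ'B' : diagonal π' * B' = U * (diagonal π * B) :=
    hA'tu.mul_left_cancel (by rw [← mul_assoc, ← h₀, ← mul_assoc, hU, mul_assoc])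
  refine ⟨U, by rw [det_mul]; exact (isUnit_nonsing_inv_det _ hA't).mul hAt, hU, hπ'B',
    fun i => hπB.mul_right_cancel <| hA'tu.mul_left_cancel ?_⟩
  calc A'ᵀ * (U * diagonal (c i) * (diagonal π * B))
      = Aᵀ * diagonal (π * c i) * B := by
        rw [← hU, mul_comm π, hdiag]
        simp only [mul_assoc]
    _ = A'ᵀ * (diagonal (c' i) * U * (diagonal π * B)) := by
        rw [h, mul_comm π', hdiag, mul_assoc, mul_assoc, mul_assoc, hπ'B']

theorem exists_perm_of_mul_diagonal_eq_diagonal_mul {U : Matrix n n R} (u₀ : n)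
    (hA₀ : ∀ α, A α u₀ = 1) (hA'₀ : ∀ α, A' α u₀ = 1)
    (hB₀ : ∀ α, B α u₀ = 1) (hB'₀ : ∀ α, B' α u₀ = 1) (hπ : ∀ α, π α ≠ 0)
    (hc : ∀ α α', (∀ i, c i α = c i α') → α = α') (hU : IsUnit U.det) (hUA : A'ᵀ * U = Aᵀ)
    (hUB : diagonal π' * B' = U * (diagonal π * B))
    (hUc : ∀ i, U * diagonal (c i) = diagonal (c' i) * U) :
    ∃ σ : Equiv.Perm n, (∀ α, A' (σ α) = A α) ∧ (∀ α, B' (σ α) = B α) ∧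
      (∀ α, π' (σ α) = π α) ∧ ∀ i α, c' i (σ α) = c i α := by
  obtain ⟨σ, hσ⟩ := exists_perm_ne_zero_iff_of_isUnit_det hU fun β α₁ α₂ h₁ h₂ =>
    hc α₁ α₂ fun i => (eq_of_mul_diagonal_eq_diagonal_mul (hUc i) h₁).trans
      (eq_of_mul_diagonal_eq_diagonal_mul (hUc i) h₂).symm
  have hArow : ∀ α u, A α u = A' (σ α) u * U (σ α) α := fun α u => by
    rw [← transpose_apply A, ← hUA, mul_apply]
    refine sum_eq_single _ (fun β _ hβ => ?_) (by simp)
    rw [not_ne_iff.mp (mt (hσ α β).mp hβ), mul_zero]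
  have hUσ : ∀ α, U (σ α) α = 1 := fun α => by simpa [hA₀, hA'₀] using (hArow α u₀).symm
  have hBrow : ∀ α v, π' (σ α) * B' (σ α) v = π α * B α v := fun α v => by
    have hσα := congrFun (congrFun hUB (σ α)) v
    rw [diagonal_mul, mul_apply, sum_eq_single α, hUσ, one_mul, diagonal_mul] at hσα
    · exact hσα
    · exact fun α' _ hα' => by
        rw [not_ne_iff.mp (mt (hσ α' (σ α)).mp (by simpa [eq_comm] using hα')), zero_mul]
    · simp
  have hπσ : ∀ α, π' (σ α) = π α := fun α => by simpa [hB₀, hB'₀] using hBrow α u₀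
  refine ⟨σ, fun α => funext fun u => by rw [hArow, hUσ, mul_one],
    fun α => funext fun v => mul_left_cancel₀ (hπ α) (by rw [← hBrow, hπσ]), hπσ,
    fun i α => (eq_of_mul_diagonal_eq_diagonal_mul (hUc i) ((hσ α (σ α)).mpr rfl)).symm⟩

/-- A matrix form of Kruskal's uniqueness theorem for three-way decompositions; the all-ones
column `u₀` removes the scaling ambiguity of the rows. -/
theorem exists_perm_of_transpose_mul_diagonal_mul_eq (u₀ : n)
    (hA : IsUnit A.det) (hB : IsUnit B.det) (hπ : ∀ α, π α ≠ 0)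
    (hA₀ : ∀ α, A α u₀ = 1) (hA'₀ : ∀ α, A' α u₀ = 1)
    (hB₀ : ∀ α, B α u₀ = 1) (hB'₀ : ∀ α, B' α u₀ = 1)
    (hc : ∀ α α', (∀ i, c i α = c i α') → α = α')
    (h₀ : Aᵀ * diagonal π * B = A'ᵀ * diagonal π' * B')
    (h : ∀ i, Aᵀ * diagonal (π * c i) * B = A'ᵀ * diagonal (π' * c' i) * B') :
    ∃ σ : Equiv.Perm n, (∀ α, A' (σ α) = A α) ∧ (∀ α, B' (σ α) = B α) ∧
      (∀ α, π' (σ α) = π α) ∧ ∀ i α, c' i (σ α) = c i α := by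
  obtain ⟨U, hU, hUA, hUB, hUc⟩ :=
    exists_conj_of_transpose_mul_diagonal_mul_eq hA hB hπ h₀ h
  exact exists_perm_of_mul_diagonal_eq_diagonal_mul u₀ hA₀ hA'₀ hB₀ hB'₀ hπ hc hU hUA hUB hUc

end Uniqueness

end Matrix

namespace LatentClass

variable {R : Type*} [CommRing R] {ι C κ : Type*}

def marginal [Fintype ι] [Fintype C] (π : C → R) (p : ι → C → R) (y : ι → Bool) : R :=
  ∑ α, π α * ∏ j, if y j then p j α else 1 - p j α

def moment [Fintype C] (π : C → R) (p : ι → C → R) (T : Finset ι) : R :=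
  ∑ α, π α * ∏ j ∈ T, p j α

section Moments

variable [Fintype ι] [DecidableEq ι]

theorem sum_prod_indicator_mul_prod_bernoulli (q : ι → R) (T : Finset ι) :
    ∑ y : ι → Bool, (∏ j ∈ T, if y j then 1 else 0) * ∏ j, (if y j then q j else 1 - q j) =
      ∏ j ∈ T, q j := by
  simp_rw [← Fintype.prod_ite_mem T, ← prod_mul_distrib]
  refine (Fintype.prod_sum fun j (b : Bool) =>
    (if j ∈ T then (if b then (1 : R) else 0) else 1) * (if b then q j else 1 - q j)).symm.trans
    (prod_congr rfl fun j _ => ?_)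
  by_cases hj : j ∈ T <;> simp [hj]

theorem moment_eq_sum_prod_indicator_mul_marginal [Fintype C] (π : C → R) (p : ι → C → R)
    (T : Finset ι) :
    moment π p T = ∑ y : ι → Bool, (∏ j ∈ T, if y j then 1 else 0) * marginal π p y := by
  simp_rw [marginal, mul_sum, moment]
  rw [sum_comm]
  refine sum_congr rfl fun α _ => ?_
  simp_rw [mul_left_comm _ (π α), ← mul_sum, sum_prod_indicator_mul_prod_bernoulli]

theorem moment_eq_of_marginal_eq {C' : Type*} [Fintype C] [Fintype C'] {π : C → R}
    {p : ι → C → R} {π' : C' → R} {p' : ι → C' → R}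
    (h : ∀ y, marginal π p y = marginal π' p' y) (T : Finset ι) :
    moment π p T = moment π' p' T := by
  simp only [moment_eq_sum_prod_indicator_mul_marginal, h]

end Moments

def itemMatrix [Fintype κ] (p : ι → C → R) (g : κ → ι) : Matrix C (κ → Bool) R :=
  of fun α u => ∏ k, if u k then p (g k) α else 1

section ItemMatrix

variable [Fintype κ]

theorem itemMatrix_apply_false (p : ι → C → R) (g : κ → ι) (α : C) :
    itemMatrix p g α (fun _ => false) = 1 := by
  simp [itemMatrix]

theorem itemMatrix_apply_decide_eq [DecidableEq κ] (p : ι → C → R) (g : κ → ι) (α : C)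
    (k : κ) :
    itemMatrix p g α (fun k' => decide (k' = k)) = p (g k) α := by
  simp [itemMatrix]

theorem itemMatrix_apply_eq_prod_image [DecidableEq ι] {g : κ → ι} (hg : Injective g)
    (p : ι → C → R) (α : C) (u : κ → Bool) :
    itemMatrix p g α u = ∏ j ∈ (univ.filter fun k => u k).image g, p j α := by
  rw [prod_image hg.injOn, prod_filter]
  rfl

theorem itemMatrix_eq_piKronecker {p : ι → (κ → Bool) → R} {g : κ → ι}
    (hdep : ∀ k α α', α k = α' k → p (g k) α = p (g k) α') :
    itemMatrix p g =
      piKronecker fun k => of fun a b : Bool => if b then p (g k) (fun _ => a) else 1 := by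
  ext α u
  exact prod_congr rfl fun k _ => by rw [hdep k α (fun _ => α k) rfl]; rfl

variable [Fintype C] [DecidableEq C] [DecidableEq ι] {g h : κ → ι}

theorem transpose_itemMatrix_mul_diagonal_mul_itemMatrix_apply (hg : Injective g)
    (hh : Injective h) (hgh : ∀ k k', g k ≠ h k') {S : Finset ι}
    (hS : ∀ k, g k ∉ S ∧ h k ∉ S) (π : C → R) (p : ι → C → R) (u v : κ → Bool) :
    ((itemMatrix p g)ᵀ * diagonal (π * fun α => ∏ j ∈ S, p j α) * itemMatrix p h) u v =
      moment π p
        ((univ.filter fun k => u k).image g ∪ ((univ.filter fun k => v k).image h ∪ S)) := by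
  have hhS : Disjoint ((univ.filter fun k => v k).image h) S := by
    simp only [disjoint_left, mem_image]
    rintro _ ⟨k, -, rfl⟩
    exact (hS k).2
  have hghS : Disjoint ((univ.filter fun k => u k).image g)
      ((univ.filter fun k => v k).image h ∪ S) := by
    simp only [disjoint_left, mem_union, mem_image, not_or]
    rintro _ ⟨k, -, rfl⟩
    exact ⟨fun ⟨k', _, hk'⟩ => hgh k k' hk'.symm, (hS k).1⟩
  rw [mul_apply]
  simp only [mul_diagonal, transpose_apply, moment, prod_union hghS, prod_union hhS,
    ← itemMatrix_apply_eq_prod_image hg, ← itemMatrix_apply_eq_prod_image hh, Pi.mul_apply]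
  exact sum_congr rfl fun α _ => by ring

theorem transpose_itemMatrix_mul_diagonal_mul_itemMatrix_eq (hg : Injective g)
    (hh : Injective h) (hgh : ∀ k k', g k ≠ h k') {π π' : C → R} {p p' : ι → C → R}
    (hmom : ∀ T, moment π p T = moment π' p' T) (S : Finset ι)
    (hS : ∀ k, g k ∉ S ∧ h k ∉ S) :
    (itemMatrix p g)ᵀ * diagonal (π * fun α => ∏ j ∈ S, p j α) * itemMatrix p h =
      (itemMatrix p' g)ᵀ * diagonal (π' * fun α => ∏ j ∈ S, p' j α) * itemMatrix p' h := by
  ext u v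
  rw [transpose_itemMatrix_mul_diagonal_mul_itemMatrix_apply hg hh hgh hS,
    transpose_itemMatrix_mul_diagonal_mul_itemMatrix_apply hg hh hgh hS, hmom]

end ItemMatrix

theorem isUnit_det_itemMatrix {𝕜 : Type*} [Field 𝕜] [Fintype κ] [DecidableEq κ]
    {p : ι → (κ → Bool) → 𝕜} {g : κ → ι}
    (hdep : ∀ k α α', α k = α' k → p (g k) α = p (g k) α')
    (hdist : ∀ k α α', α k ≠ α' k → p (g k) α ≠ p (g k) α') : IsUnit (itemMatrix p g).det := by
  rw [itemMatrix_eq_piKronecker hdep]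
  refine isUnit_det_piKronecker _ fun k => ?_
  rw [isUnit_iff_ne_zero, ← det_reindex_self finTwoEquiv.symm, det_fin_two]
  simpa [finTwoEquiv, sub_eq_zero] using hdist k (fun _ => true) (fun _ => false) (by simp)

end LatentClass

open LatentClass

theorem dcm_three_identity_submatrices_identifiability_general
    (K J : ℕ)
    (p : Fin J → (Fin K → Bool) → ℝ) (π : (Fin K → Bool) → ℝ)
    (f : Fin 3 → Fin K → Fin J)
    (hinj : Function.Injective (fun ik : Fin 3 × Fin K => f ik.1 ik.2))
    (hdep : ∀ (i : Fin 3) (k : Fin K), ∀ α α' : Fin K → Bool,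
      α k = α' k → p (f i k) α = p (f i k) α')
    (hdist : ∀ (i : Fin 3) (k : Fin K), ∀ α α' : Fin K → Bool,
      α k ≠ α' k → p (f i k) α ≠ p (f i k) α')
    (hπ : ∀ α, 0 < π α) :
    ∀ (p' : Fin J → (Fin K → Bool) → ℝ) (π' : (Fin K → Bool) → ℝ),
      (∀ j α, 0 ≤ p' j α ∧ p' j α ≤ 1) →
      (∀ α, 0 ≤ π' α) → (∑ α, π' α = 1) →
      (∀ y : Fin J → Bool,
        ∑ α, π α * ∏ j, (if y j then p j α else 1 - p j α) =
        ∑ α, π' α * ∏ j, (if y j then p' j α else 1 - p' j α)) →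
      ∃ σ : Equiv.Perm (Fin K → Bool),
        (∀ j α, p' j (σ α) = p j α) ∧ (∀ α, π' (σ α) = π α) := by
  intro p' π' _ _ _ hP
  have hf : ∀ i, Injective (f i) := fun i k k' h =>
    congrArg Prod.snd (hinj (a₁ := (i, k)) (a₂ := (i, k')) h)
  have hf_ne : ∀ i i' k k', i ≠ i' → f i k ≠ f i' k' := fun i i' k k' hi h =>
    hi (congrArg Prod.fst (hinj (a₁ := (i, k)) (a₂ := (i', k')) h))
  have hmat := transpose_itemMatrix_mul_diagonal_mul_itemMatrix_eq (hf 0) (hf 1)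
    (fun k k' => hf_ne 0 1 k k' (by decide)) (moment_eq_of_marginal_eq hP)
  have hsep : ∀ α α', (∀ j : {j // ∀ k, f 0 k ≠ j ∧ f 1 k ≠ j}, p j α = p j α') → α = α' := by
    intro α α' h
    by_contra hne
    obtain ⟨k, hk⟩ := Function.ne_iff.mp hne
    exact hdist 2 k α α' hk
      (h ⟨f 2 k, fun k' => ⟨hf_ne 0 2 k' k (by decide), hf_ne 1 2 k' k (by decide)⟩⟩)
  obtain ⟨σ, hA, hB, hπσ, hc⟩ := Matrix.exists_perm_of_transpose_mul_diagonal_mul_eq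
    (c := fun j : {j // ∀ k, f 0 k ≠ j ∧ f 1 k ≠ j} => p j) (c' := fun j => p' j)
    (fun _ => false)
    (isUnit_det_itemMatrix (hdep 0) (hdist 0)) (isUnit_det_itemMatrix (hdep 1) (hdist 1))
    (fun α => (hπ α).ne') (itemMatrix_apply_false p _) (itemMatrix_apply_false p' _)
    (itemMatrix_apply_false p _) (itemMatrix_apply_false p' _) hsep
    (by simpa [← Pi.one_def] using hmat ∅ (by simp))
    (fun j => by simpa using hmat {j.1} (by simpa [eq_comm] using j.2))
  refine ⟨σ, fun j α => ?_, hπσ⟩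
  by_cases h0 : ∃ k, f 0 k = j
  · obtain ⟨k, rfl⟩ := h0
    simpa only [itemMatrix_apply_decide_eq] using congrFun (hA α) fun k' => decide (k' = k)
  by_cases h1 : ∃ k, f 1 k = j
  · obtain ⟨k, rfl⟩ := h1
    simpa only [itemMatrix_apply_decide_eq] using congrFun (hB α) fun k' => decide (k' = k)
  simp only [not_exists] at h0 h1
  exact hc ⟨j, fun k => ⟨h0 k, h1 k⟩⟩ α

/-- **Identifiability of a DCM whose Q-matrix contains three identity submatrices
(Corollary 1).**
The latent classes are the binary attribute profiles `α : Fin K → Bool`, with class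
proportions `π α > 0` and conditional positive response probabilities
`p j α ∈ [0,1]` for `J` binary items. Suppose there are three pairwise disjoint sets
of `K` items each (encoded by the map `f : Fin 3 → Fin K → Fin J`, injective as a map
on pairs) such that for each attribute `k`, the item `f i k` of the `i`-th set depends
on `α` only through `α k` and takes distinct values for `α k = false` and `α k = true`
(i.e. the Q-matrix contains three distinct `K×K` identity submatrices).
Then the item response probabilities and the class proportions are identifiable up to
a permutation of the class labels. -/
theorem dcm_three_identity_submatrices_identifiability
    (K J : ℕ)
    (p : Fin J → (Fin K → Bool) → ℝ) (π : (Fin K → Bool) → ℝ)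
    (hp : ∀ j α, 0 ≤ p j α ∧ p j α ≤ 1)
    (hπ1 : ∑ α, π α = 1)
    (f : Fin 3 → Fin K → Fin J)
    (hinj : Function.Injective (fun ik : Fin 3 × Fin K => f ik.1 ik.2))
    (hdep : ∀ (i : Fin 3) (k : Fin K), ∀ α α' : Fin K → Bool,
      α k = α' k → p (f i k) α = p (f i k) α')
    (hdist : ∀ (i : Fin 3) (k : Fin K), ∀ α α' : Fin K → Bool,
      α k ≠ α' k → p (f i k) α ≠ p (f i k) α')
    (hπ : ∀ α, 0 < π α) :
    ∀ (p' : Fin J → (Fin K → Bool) → ℝ) (π' : (Fin K → Bool) → ℝ),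
      (∀ j α, 0 ≤ p' j α ∧ p' j α ≤ 1) →
      (∀ α, 0 ≤ π' α) → (∑ α, π' α = 1) →
      (∀ y : Fin J → Bool,
        ∑ α, π α * ∏ j, (if y j then p j α else 1 - p j α) =
        ∑ α, π' α * ∏ j, (if y j then p' j α else 1 - p' j α)) →
      ∃ σ : Equiv.Perm (Fin K → Bool),
        (∀ j α, p' j (σ α) = p j α) ∧ (∀ α, π' (σ α) = π α) :=
  dcm_three_identity_submatrices_identifiability_general K J p π f hinj hdep hdist hπ
end

section
/- Consider a latent class model with M > 2 latent classes and J items, where item j takes k_j possible values and p_{jα} = (p_{jα}^1,…,p_{jα}^{k_j}) is the conditional response distribution of item j for class α. Assume: (B1) for each item j, the vectors p_{jα}, α = 1,…,M, take exactly two distinct values; (B2) there exist three pairwise disjoint subsets I₁, I₂, I₃ of the items such that for every pair of distinct classes α₁ ≠ α₂ and each l = 1, 2, 3, there is an item j ∈ I_l and some k ∈ {1,…,k_j − 1} with p_{jα₁}^1 + … + p_{jα₁}^k ≠ p_{jα₂}^1 + … + p_{jα₂}^k; (B3) π_α > 0 for every class α. Then the item response probabilities p_{jα}^k and the class proportions π_α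 are identifiable up to a permutation of the class labels. -/
open Finset

lemma lcmi_dual_eval {k : ℕ} (o f : Fin k → ℝ) (t0 : Fin k) (d : ℝ) :
    ∑ t, (((if t = t0 then (1:ℝ) else 0) - o t0) / d) * f t
      = (f t0 - o t0 * ∑ t, f t) / d := by
  have h : ∀ t, (((if t = t0 then (1:ℝ) else 0) - o t0) / d) * f t
      = ((if t = t0 then f t else 0) - o t0 * f t) / d := by
    intro t; split_ifs <;> ring
  rw [Finset.sum_congr rfl (fun t _ => h t), ← Finset.sum_div]
  rw [Finset.sum_sub_distrib, Finset.sum_ite_eq' Finset.univ t0 f,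
    if_pos (Finset.mem_univ _), ← Finset.mul_sum]

lemma lcmi_item_dual {k M : ℕ} (P : Fin M → Fin k → ℝ) (hP1 : ∀ α, ∑ t, P α t = 1)
    (h2 : (Set.range P).ncard = 2) (α : Fin M) :
    ∃ u : Fin k → ℝ, ∀ γ,
      (P γ = P α → ∑ t, u t * P γ t = 1) ∧ (P γ ≠ P α → ∑ t, u t * P γ t = 0) := by
  classical
  obtain ⟨q, r, hqr, hset⟩ := Set.ncard_eq_two.mp h2
  have hmem : ∀ γ, P γ = q ∨ P γ = r := by
    intro γ
    have : P γ ∈ Set.range P := ⟨γ, rfl⟩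
    rw [hset] at this
    simpa using this
  set o : Fin k → ℝ := if P α = q then r else q with ho_def
  have ho_ne : o ≠ P α := by
    rw [ho_def]
    split_ifs with h
    · rw [h]; exact fun hc => hqr hc.symm
    · exact fun hc => h hc.symm
  have ho_other : ∀ γ, P γ ≠ P α → P γ = o := by
    intro γ hγ
    rcases hmem α with h | h
    · rw [ho_def, if_pos h]
      rcases hmem γ with h' | h'
      · exact absurd (h'.trans h.symm) hγ
      · exact h'
    · have hne : P α ≠ q := by rw [h]; exact hqr.symm
      rw [ho_def, if_neg hne]
      rcases hmem γ with h' | h'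
      · exact h'
      · exact absurd (h'.trans h.symm) hγ
  have hosum : ∑ t, o t = 1 := by
    have hq : ∃ γ, P γ = q := by
      have : q ∈ Set.range P := by rw [hset]; exact Set.mem_insert _ _
      exact this
    have hr : ∃ γ, P γ = r := by
      have : r ∈ Set.range P := by rw [hset]; exact Set.mem_insert_of_mem _ rfl
      exact this
    obtain ⟨γq, hγq⟩ := hq
    obtain ⟨γr, hγr⟩ := hr
    rw [ho_def]
    split
    · rw [← hγr]; exact hP1 γr
    · rw [← hγq]; exact hP1 γq
  obtain ⟨t0, ht0⟩ := Function.ne_iff.mp (Ne.symm ho_ne)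
  set d : ℝ := P α t0 - o t0 with hd_def
  have hd0 : d ≠ 0 := sub_ne_zero.mpr ht0
  refine ⟨fun t => ((if t = t0 then 1 else 0) - o t0) / d, fun γ => ⟨?_, ?_⟩⟩
  · intro hγ
    rw [lcmi_dual_eval, hγ, hP1 α, mul_one]
    exact div_self hd0
  · intro hγ
    rw [lcmi_dual_eval, ho_other γ hγ, hosum, mul_one, sub_self, zero_div]

open Finset

section Core

variable {M : ℕ} {X Y Z : Type*} [Fintype X] [Fintype Y] [Fintype Z]

/-- Pairing of product functionals with product functions factorizes. -/
lemma lcmi_pair (f : X → ℝ) (g : Y → ℝ) (F : X → ℝ) (G : Y → ℝ) :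
    ∑ q : X × Y, (f q.1 * g q.2) * (F q.1 * G q.2)
      = (∑ x, f x * F x) * (∑ y, g y * G y) := by
  rw [Fintype.sum_prod_type, Finset.sum_mul_sum]
  exact Finset.sum_congr rfl fun x _ => Finset.sum_congr rfl fun y _ => by ring

lemma lcmi_core_unique
    (a a' : Fin M → X → ℝ) (b b' : Fin M → Y → ℝ) (cc cc' : Fin M → Z → ℝ)
    (w w' : Fin M → ℝ)
    (u : Fin M → X → ℝ) (v : Fin M → Y → ℝ) (τ : Fin M → Z → ℝ)
    (hu : ∀ α γ, ∑ x, u α x * a γ x = if α = γ then 1 else 0)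
    (hv : ∀ α γ, ∑ y, v α y * b γ y = if α = γ then 1 else 0)
    (hτ : ∀ α γ, ∑ z, τ α z * cc γ z = if α = γ then 1 else 0)
    (ha1 : ∀ α, ∑ x, a α x = 1) (hb1 : ∀ α, ∑ y, b α y = 1)
    (hc1 : ∀ α, ∑ z, cc α z = 1)
    (ha'1 : ∀ α, ∑ x, a' α x = 1) (hb'1 : ∀ α, ∑ y, b' α y = 1)
    (hc'1 : ∀ α, ∑ z, cc' α z = 1)
    (hw : ∀ α, 0 < w α)
    (hE : ∀ x y z, ∑ α, w α * (a α x * b α y * cc α z)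
        = ∑ β, w' β * (a' β x * b' β y * cc' β z)) :
    ∃ σ : Equiv.Perm (Fin M),
      (∀ α, a' (σ α) = a α) ∧ (∀ α, b' (σ α) = b α) ∧ (∀ α, cc' (σ α) = cc α)
        ∧ (∀ α, w' (σ α) = w α) := by
  classical
  -- the rank-one "slab" functions
  set AB : Fin M → (X × Y → ℝ) := fun α q => a α q.1 * b α q.2 with hAB
  set AB' : Fin M → (X × Y → ℝ) := fun β q => a' β q.1 * b' β q.2 with hAB'
  have hABq : ∀ α q, AB α q = a α q.1 * b α q.2 := fun _ _ => rfl
  have hAB'q : ∀ β q, AB' β q = a' β q.1 * b' β q.2 := fun _ _ => rfl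
  -- slice identity
  set K : Fin M → Fin M → ℝ := fun β α => w' β * ∑ z, τ α z * cc' β z with hK
  have exchange : ∀ (A : Fin M → X → ℝ) (B : Fin M → Y → ℝ) (cC : Fin M → Z → ℝ)
      (ww : Fin M → ℝ) (α : Fin M) (x : X) (y : Y),
      ∑ z, τ α z * (∑ γ, ww γ * (A γ x * B γ y * cC γ z))
        = ∑ γ, (ww γ * (A γ x * B γ y)) * (∑ z, τ α z * cC γ z) := by
    intro A B cC ww α x y
    simp only [Finset.mul_sum]
    rw [Finset.sum_comm]
    exact Finset.sum_congr rfl fun γ _ => Finset.sum_congr rfl fun z _ => by ring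
  have slice : ∀ α (x : X) (y : Y),
      w α * (a α x * b α y) = ∑ β, K β α * (a' β x * b' β y) := by
    intro α x y
    have h2 : ∑ z, τ α z * (∑ γ, w γ * (a γ x * b γ y * cc γ z))
        = ∑ z, τ α z * (∑ β, w' β * (a' β x * b' β y * cc' β z)) :=
      Finset.sum_congr rfl fun z _ => by rw [hE x y z]
    rw [exchange, exchange] at h2
    have h3 : ∑ γ, (w γ * (a γ x * b γ y)) * (∑ z, τ α z * cc γ z)
        = w α * (a α x * b α y) := by
      have h4 : ∀ γ, (w γ * (a γ x * b γ y)) * (∑ z, τ α z * cc γ z)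
          = if α = γ then w γ * (a γ x * b γ y) else 0 := by
        intro γ; rw [hτ]; split <;> ring
      rw [Finset.sum_congr rfl fun γ _ => h4 γ, Finset.sum_ite_eq, if_pos (Finset.mem_univ _)]
    rw [h3] at h2
    rw [h2]
    exact Finset.sum_congr rfl fun β _ => by simp only [hK]; ring
  -- applying a product functional to a finite sum of slabs
  have apply_fun_sum : ∀ (γ δ : Fin M) (t : Fin M → ℝ) (A : Fin M → X → ℝ)
      (B : Fin M → Y → ℝ),
      ∑ q : X × Y, (u γ q.1 * v δ q.2) * (∑ α, t α * (A α q.1 * B α q.2))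
        = ∑ α, t α * ((∑ x, u γ x * A α x) * (∑ y, v δ y * B α y)) := by
    intro γ δ t A B
    have h1 : ∀ q : X × Y, (u γ q.1 * v δ q.2) * (∑ α, t α * (A α q.1 * B α q.2))
        = ∑ α, t α * ((u γ q.1 * v δ q.2) * (A α q.1 * B α q.2)) := by
      intro q; rw [Finset.mul_sum]; exact Finset.sum_congr rfl fun α _ => by ring
    rw [Finset.sum_congr rfl fun q _ => h1 q, Finset.sum_comm]
    refine Finset.sum_congr rfl fun α _ => ?_
    rw [← Finset.mul_sum, lcmi_pair]
  -- linear independence of the slabs AB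
  have hli : LinearIndependent ℝ AB := by
    rw [Fintype.linearIndependent_iff]
    intro g hg γ
    have h0 : ∑ q : X × Y, (u γ q.1 * v γ q.2) * ((∑ α, g α • AB α) q) = 0 := by
      rw [hg]; simp
    have h1 : ∀ q : X × Y, (∑ α, g α • AB α) q = ∑ α, g α * (a α q.1 * b α q.2) := by
      intro q; rw [Finset.sum_apply]
      exact Finset.sum_congr rfl fun α _ => by simp [hAB]
    rw [Finset.sum_congr rfl fun q _ => by rw [h1 q]] at h0
    rw [apply_fun_sum] at h0
    have h2 : ∀ α : Fin M, g α * ((∑ x, u γ x * a α x) * (∑ y, v γ y * b α y))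
        = if γ = α then g α else 0 := by
      intro α; rw [hu, hv]; split <;> ring
    rw [Finset.sum_congr rfl fun α _ => h2 α, Finset.sum_ite_eq, if_pos (Finset.mem_univ _)] at h0
    exact h0
  -- each AB α lies in the span of the AB'
  have hmemspan : ∀ α, AB α ∈ Submodule.span ℝ (Set.range AB') := by
    intro α
    have hrep : AB α = ∑ β, ((w α)⁻¹ * K β α) • AB' β := by
      funext q
      rw [Finset.sum_apply]
      have : AB α q = (w α)⁻¹ * (w α * (a α q.1 * b α q.2)) := by
        rw [← mul_assoc, inv_mul_cancel₀ (hw α).ne', one_mul, hABq]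
      rw [this, slice, Finset.mul_sum]
      exact Finset.sum_congr rfl fun β _ => by simp [hAB']; ring
    rw [hrep]
    exact Submodule.sum_mem _ fun β _ =>
      Submodule.smul_mem _ _ (Submodule.subset_span ⟨β, rfl⟩)
  -- span equality via dimension count
  have hspan_le : Submodule.span ℝ (Set.range AB) ≤ Submodule.span ℝ (Set.range AB') :=
    Submodule.span_le.mpr (Set.range_subset_iff.mpr hmemspan)
  have hfr1 : Module.finrank ℝ (Submodule.span ℝ (Set.range AB)) = M := by
    rw [finrank_span_eq_card hli, Fintype.card_fin]
  have hfr2 : Module.finrank ℝ (Submodule.span ℝ (Set.range AB')) ≤ M := by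
    have h1 : Set.range AB' = ↑(Finset.image AB' Finset.univ) := by
      rw [Finset.coe_image, Finset.coe_univ, Set.image_univ]
    rw [h1]
    refine le_trans (finrank_span_finset_le_card _) ?_
    exact le_trans Finset.card_image_le (by simp)
  have hspan_eq : Submodule.span ℝ (Set.range AB) = Submodule.span ℝ (Set.range AB') :=
    Submodule.eq_of_le_of_finrank_le hspan_le (by rw [hfr1]; exact hfr2)
  -- each AB' β is a slab AB α
  have hstep4 : ∀ β, ∃ α, a' β = a α ∧ b' β = b α := by
    intro β
    have hmem' : AB' β ∈ Submodule.span ℝ (Set.range AB) := by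
      rw [hspan_eq]; exact Submodule.subset_span ⟨β, rfl⟩
    obtain ⟨t, ht⟩ := (Submodule.mem_span_range_iff_exists_fun ℝ).mp hmem'
    have htq : ∀ q : X × Y, ∑ α, t α * (a α q.1 * b α q.2) = a' β q.1 * b' β q.2 := by
      intro q
      have hq := congrFun ht q
      rw [Finset.sum_apply] at hq
      calc ∑ α, t α * (a α q.1 * b α q.2) = ∑ α, (t α • AB α) q :=
            Finset.sum_congr rfl fun α _ => by simp [hAB]
        _ = AB' β q := hq
        _ = a' β q.1 * b' β q.2 := rfl
    -- nonvanishing points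
    obtain ⟨y0, hy0⟩ : ∃ y0, b' β y0 ≠ 0 := by
      by_contra h
      push_neg at h
      have := hb'1 β
      rw [Finset.sum_congr rfl fun y _ => h y] at this
      simp at this
    obtain ⟨x0, hx0⟩ : ∃ x0, a' β x0 ≠ 0 := by
      by_contra h
      push_neg at h
      have := ha'1 β
      rw [Finset.sum_congr rfl fun x _ => h x] at this
      simp at this
    -- representation of a' β and b' β
    set s : Fin M → ℝ := fun α => t α * b α y0 / b' β y0 with hs
    set r : Fin M → ℝ := fun α => t α * a α x0 / a' β x0 with hr
    have ha'rep : ∀ x, a' β x = ∑ α, s α * a α x := by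
      intro x
      have h1 := htq (x, y0)
      have h2 : ∑ α, s α * a α x = (∑ α, t α * (a α x * b α y0)) / b' β y0 := by
        rw [Finset.sum_div]
        exact Finset.sum_congr rfl fun α _ => by simp [hs]; ring
      rw [h2, h1]
      field_simp
    have hb'rep : ∀ y, b' β y = ∑ α, r α * b α y := by
      intro y
      have h1 := htq (x0, y)
      have h2 : ∑ α, r α * b α y = (∑ α, t α * (a α x0 * b α y)) / a' β x0 := by
        rw [Finset.sum_div]
        exact Finset.sum_congr rfl fun α _ => by simp [hr]; ring
      rw [h2, h1]
      field_simp
    -- sums of coefficients are 1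
    have hssum : ∑ α, s α = 1 := by
      have h1 : ∑ x, a' β x = ∑ α, s α := by
        rw [Finset.sum_congr rfl fun x _ => ha'rep x, Finset.sum_comm]
        refine Finset.sum_congr rfl fun α _ => ?_
        rw [← Finset.mul_sum, ha1, mul_one]
      rw [← h1, ha'1]
    have hrsum : ∑ α, r α = 1 := by
      have h1 : ∑ y, b' β y = ∑ α, r α := by
        rw [Finset.sum_congr rfl fun y _ => hb'rep y, Finset.sum_comm]
        refine Finset.sum_congr rfl fun α _ => ?_
        rw [← Finset.mul_sum, hb1, mul_one]
      rw [← h1, hb'1]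
    -- dual collapse helpers
    have dualA : ∀ (γ : Fin M) (co : Fin M → ℝ),
        ∑ x, u γ x * (∑ α, co α * a α x) = co γ := by
      intro γ co
      simp only [Finset.mul_sum]
      rw [Finset.sum_comm]
      have h1 : ∀ α, ∑ x, u γ x * (co α * a α x) = co α * ∑ x, u γ x * a α x := by
        intro α; rw [Finset.mul_sum]; exact Finset.sum_congr rfl fun x _ => by ring
      rw [Finset.sum_congr rfl fun α _ => h1 α,
        Finset.sum_congr rfl fun α _ => by rw [hu γ α]]
      simp
    have dualB : ∀ (δ : Fin M) (co : Fin M → ℝ),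
        ∑ y, v δ y * (∑ α, co α * b α y) = co δ := by
      intro δ co
      simp only [Finset.mul_sum]
      rw [Finset.sum_comm]
      have h1 : ∀ α, ∑ y, v δ y * (co α * b α y) = co α * ∑ y, v δ y * b α y := by
        intro α; rw [Finset.mul_sum]; exact Finset.sum_congr rfl fun y _ => by ring
      rw [Finset.sum_congr rfl fun α _ => h1 α,
        Finset.sum_congr rfl fun α _ => by rw [hv δ α]]
      simp
    have hPa : ∀ γ, ∑ x, u γ x * a' β x = s γ := by
      intro γ
      rw [Finset.sum_congr rfl fun x _ => by rw [ha'rep x]]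
      exact dualA γ s
    have hQb : ∀ δ, ∑ y, v δ y * b' β y = r δ := by
      intro δ
      rw [Finset.sum_congr rfl fun y _ => by rw [hb'rep y]]
      exact dualB δ r
    -- cross products vanish
    have hcross : ∀ γ δ, γ ≠ δ → s γ * r δ = 0 := by
      intro γ δ hne
      have hL : ∑ q : X × Y, (u γ q.1 * v δ q.2) * (a' β q.1 * b' β q.2)
          = s γ * r δ := by
        rw [lcmi_pair, hPa, hQb]
      have hR : ∑ q : X × Y, (u γ q.1 * v δ q.2) * (a' β q.1 * b' β q.2) = 0 := by
        rw [Finset.sum_congr rfl fun q _ => by rw [← htq q]]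
        rw [apply_fun_sum]
        rw [Finset.sum_congr rfl fun α _ => by rw [hu γ α, hv δ α]]
        refine Finset.sum_eq_zero fun α _ => ?_
        rcases eq_or_ne γ α with h | h
        · rw [if_neg (show ¬ δ = α from fun hc => hne (h.trans hc.symm))]
          ring
        · rw [if_neg h]; ring
      rw [← hL, hR]
    -- find the unique supporting index
    obtain ⟨α₀, hα₀⟩ : ∃ α₀, s α₀ ≠ 0 := by
      by_contra h
      push_neg at h
      rw [Finset.sum_congr rfl fun α _ => h α] at hssum
      simp at hssum
    have hrzero : ∀ δ, δ ≠ α₀ → r δ = 0 := by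
      intro δ h
      have := hcross α₀ δ (fun hc => h hc.symm)
      exact (mul_eq_zero.mp this).resolve_left hα₀
    have hrα₀ : r α₀ = 1 := by
      have := Finset.sum_eq_single α₀ (fun δ _ h => hrzero δ h) (fun h => absurd (Finset.mem_univ _) h)
      rw [this] at hrsum
      exact hrsum
    have hszero : ∀ γ, γ ≠ α₀ → s γ = 0 := by
      intro γ h
      have := hcross γ α₀ h
      rw [hrα₀, mul_one] at this
      exact this
    have hsα₀ : s α₀ = 1 := by
      have := Finset.sum_eq_single α₀ (fun γ _ h => hszero γ h) (fun h => absurd (Finset.mem_univ _) h)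
      rw [this] at hssum
      exact hssum
    refine ⟨α₀, ?_, ?_⟩
    · funext x
      rw [ha'rep x]
      rw [Finset.sum_eq_single α₀ (fun γ _ h => by rw [hszero γ h, zero_mul])
        (fun h => absurd (Finset.mem_univ _) h), hsα₀, one_mul]
    · funext y
      rw [hb'rep y]
      rw [Finset.sum_eq_single α₀ (fun δ _ h => by rw [hrzero δ h, zero_mul])
        (fun h => absurd (Finset.mem_univ _) h), hrα₀, one_mul]
  -- the matching map
  choose f hfa hfb using hstep4
  have hfsurj : Function.Surjective f := by
    intro γ
    by_contra h
    push_neg at h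
    have h1 : ∑ q : X × Y, (u γ q.1 * v γ q.2) * (w γ * (a γ q.1 * b γ q.2)) = w γ := by
      have : ∀ q : X × Y, (u γ q.1 * v γ q.2) * (w γ * (a γ q.1 * b γ q.2))
          = w γ * ((u γ q.1 * v γ q.2) * (a γ q.1 * b γ q.2)) := fun q => by ring
      rw [Finset.sum_congr rfl fun q _ => this q, ← Finset.mul_sum, lcmi_pair,
        hu γ γ, hv γ γ]
      simp
    have h2 : ∑ q : X × Y, (u γ q.1 * v γ q.2) * (w γ * (a γ q.1 * b γ q.2)) = 0 := by
      rw [Finset.sum_congr rfl fun q _ => by rw [slice γ q.1 q.2]]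
      rw [apply_fun_sum γ γ (fun β => K β γ) a' b']
      refine Finset.sum_eq_zero fun β _ => ?_
      have ha'β : ∑ x, u γ x * a' β x = 0 := by
        rw [hfa β, hu γ (f β), if_neg (fun hc => h β hc.symm)]
      rw [ha'β]
      ring
    rw [h1] at h2
    exact absurd h2 (hw γ).ne'
  have hfbij : Function.Bijective f :=
    (Fintype.bijective_iff_surjective_and_card f).mpr ⟨hfsurj, by simp⟩
  let e : Equiv.Perm (Fin M) := Equiv.ofBijective f hfbij
  have hfe : ∀ γ, f (e.symm γ) = γ := by
    intro γ
    exact (show f (e.symm γ) = e (e.symm γ) from rfl).trans (Equiv.apply_symm_apply e γ)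
  -- identify the remaining slot and the weights
  have hkey : ∀ γ z, w γ * cc γ z = w' (e.symm γ) * cc' (e.symm γ) z := by
    intro γ z
    have hL : ∑ q : X × Y, (u γ q.1 * v γ q.2) * (∑ α, w α * (a α q.1 * b α q.2 * cc α z))
        = w γ * cc γ z := by
      have h1 : ∀ q : X × Y, ∑ α, w α * (a α q.1 * b α q.2 * cc α z)
          = ∑ α, (w α * cc α z) * (a α q.1 * b α q.2) :=
        fun q => Finset.sum_congr rfl fun α _ => by ring
      rw [Finset.sum_congr rfl fun q _ => by rw [h1 q],
        apply_fun_sum γ γ (fun α => w α * cc α z) a b,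
        Finset.sum_congr rfl fun α _ => by rw [hu γ α, hv γ α]]
      rw [Finset.sum_eq_single γ (fun α _ h => by
        rw [if_neg (fun hc => h (hc.symm))]; ring) (fun h => absurd (Finset.mem_univ _) h)]
      simp
    have hR : ∑ q : X × Y, (u γ q.1 * v γ q.2) * (∑ β, w' β * (a' β q.1 * b' β q.2 * cc' β z))
        = w' (e.symm γ) * cc' (e.symm γ) z := by
      have h1 : ∀ q : X × Y, ∑ β, w' β * (a' β q.1 * b' β q.2 * cc' β z)
          = ∑ β, (w' β * cc' β z) * (a' β q.1 * b' β q.2) :=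
        fun q => Finset.sum_congr rfl fun β _ => by ring
      rw [Finset.sum_congr rfl fun q _ => by rw [h1 q],
        apply_fun_sum γ γ (fun β => w' β * cc' β z) a' b']
      have h2 : ∀ β, (w' β * cc' β z) * ((∑ x, u γ x * a' β x) * (∑ y, v γ y * b' β y))
          = (w' β * cc' β z) * ((if γ = f β then 1 else 0) * (if γ = f β then 1 else 0)) := by
        intro β
        rw [hfa β, hfb β, hu γ (f β), hv γ (f β)]
      rw [Finset.sum_congr rfl fun β _ => h2 β]
      rw [Finset.sum_eq_single (e.symm γ) (fun β _ h => by
        rw [if_neg (fun hc : γ = f β => h (by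
          have : e.symm γ = e.symm (f β) := by rw [← hc]
          rw [show e.symm (f β) = e.symm (e β) from rfl, Equiv.symm_apply_apply] at this
          exact this.symm))]
        ring) (fun h => absurd (Finset.mem_univ _) h)]
      rw [if_pos (hfe γ).symm]
      ring
    have hLR : ∑ q : X × Y, (u γ q.1 * v γ q.2) * (∑ α, w α * (a α q.1 * b α q.2 * cc α z))
        = ∑ q : X × Y, (u γ q.1 * v γ q.2) * (∑ β, w' β * (a' β q.1 * b' β q.2 * cc' β z)) :=
      Finset.sum_congr rfl fun q _ => by rw [hE q.1 q.2 z]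
    rw [← hL, hLR, hR]
  have hwfin : ∀ γ, w' (e.symm γ) = w γ := by
    intro γ
    have h1 : ∑ z, w γ * cc γ z = ∑ z, w' (e.symm γ) * cc' (e.symm γ) z :=
      Finset.sum_congr rfl fun z _ => hkey γ z
    rw [← Finset.mul_sum, ← Finset.mul_sum, hc1, hc'1, mul_one, mul_one] at h1
    exact h1.symm
  have hccfin : ∀ γ, cc' (e.symm γ) = cc γ := by
    intro γ
    funext z
    have h1 := hkey γ z
    rw [hwfin γ] at h1
    exact (mul_left_cancel₀ (hw γ).ne' h1).symm
  refine ⟨e.symm, ?_, ?_, hccfin, hwfin⟩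
  · intro α
    rw [show a' (e.symm α) = a (f (e.symm α)) from hfa _, hfe α]
  · intro α
    rw [show b' (e.symm α) = b (f (e.symm α)) from hfb _, hfe α]

end Core

open Finset

section Blocks

variable {J M : ℕ} {c : Fin J → ℕ}

/-- Product of the item response probabilities over a block of items. -/
def lcmiA (c : Fin J → ℕ) (q : (j : Fin J) → Fin M → Fin (c j) → ℝ)
    (S : Finset (Fin J)) (α : Fin M) (x : ∀ j : {j // j ∈ S}, Fin (c j.1)) : ℝ :=
  ∏ j, q j.1 α (x j)

lemma lcmi_pi_sum (S : Finset (Fin J)) (g : ∀ j : {j // j ∈ S}, Fin (c j.1) → ℝ) :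
    ∑ x : (∀ j : {j // j ∈ S}, Fin (c j.1)), ∏ j, g j (x j)
      = ∏ j : {j // j ∈ S}, ∑ t, g j t :=
  (Fintype.prod_sum (fun j t => g j t)).symm

lemma lcmiA_norm (q : (j : Fin J) → Fin M → Fin (c j) → ℝ)
    (hq1 : ∀ j α, ∑ t, q j α t = 1) (S : Finset (Fin J)) (α : Fin M) :
    ∑ x : (∀ j : {j // j ∈ S}, Fin (c j.1)), lcmiA c q S α x = 1 := by
  rw [show (∑ x : (∀ j : {j // j ∈ S}, Fin (c j.1)), lcmiA c q S α x)
      = ∑ x : (∀ j : {j // j ∈ S}, Fin (c j.1)), ∏ j, q j.1 α (x j) from rfl,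
    lcmi_pi_sum S (fun j t => q j.1 α t)]
  exact Finset.prod_eq_one fun j _ => hq1 j.1 α

lemma lcmi_split3 (S0 S1 S2 : Finset (Fin J)) (h01 : Disjoint S0 S1)
    (h02 : Disjoint S0 S2) (h12 : Disjoint S1 S2)
    (F0 : {j // j ∈ S0} → ℝ) (F1 : {j // j ∈ S1} → ℝ) (F2 : {j // j ∈ S2} → ℝ) :
    ∏ j : Fin J, (if h : j ∈ S0 then F0 ⟨j, h⟩ else if h : j ∈ S1 then F1 ⟨j, h⟩
      else if h : j ∈ S2 then F2 ⟨j, h⟩ else 1)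
    = (∏ j, F0 j) * (∏ j, F1 j) * (∏ j, F2 j) := by
  classical
  set f : Fin J → ℝ := fun j => if h : j ∈ S0 then F0 ⟨j, h⟩ else if h : j ∈ S1 then F1 ⟨j, h⟩
      else if h : j ∈ S2 then F2 ⟨j, h⟩ else 1 with hf
  have hstep : ∏ j ∈ (S0 ∪ S1) ∪ S2, f j = ∏ j : Fin J, f j := by
    refine Finset.prod_subset (Finset.subset_univ _) fun j _ hj => ?_
    simp only [Finset.mem_union, not_or] at hj
    simp [hf, hj.1.1, hj.1.2, hj.2]
  have hd : Disjoint (S0 ∪ S1) S2 := Finset.disjoint_union_left.mpr ⟨h02, h12⟩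
  rw [← hstep, Finset.prod_union hd, Finset.prod_union h01]
  have h0 : ∏ j ∈ S0, f j = ∏ j, F0 j := by
    rw [← Finset.prod_attach S0 f, Finset.univ_eq_attach]
    exact Finset.prod_congr rfl fun j _ => by simp [hf, j.2]
  have h1 : ∏ j ∈ S1, f j = ∏ j, F1 j := by
    rw [← Finset.prod_attach S1 f, Finset.univ_eq_attach]
    refine Finset.prod_congr rfl fun j _ => ?_
    have hnot : j.1 ∉ S0 := Finset.disjoint_right.mp h01 j.2
    simp [hf, hnot, j.2]
  have h2 : ∏ j ∈ S2, f j = ∏ j, F2 j := by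
    rw [← Finset.prod_attach S2 f, Finset.univ_eq_attach]
    refine Finset.prod_congr rfl fun j _ => ?_
    have hnot0 : j.1 ∉ S0 := Finset.disjoint_right.mp h02 j.2
    have hnot1 : j.1 ∉ S1 := Finset.disjoint_right.mp h12 j.2
    simp [hf, hnot0, hnot1, j.2]
  rw [h0, h1, h2]

end Blocks

/-- **Identifiability of the multi-category latent class model with two-valued items
(Theorem 2).**
There are `M > 2` latent classes and `J` items; item `j` takes `c j` possible values and
`p j α : Fin (c j) → ℝ` is its conditional response distribution for class `α`.
Assume:
(B1) for each item `j` the vectors `p j α`, `α = 1,…,M`, take exactly two distinct values;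
(B2) there are three pairwise disjoint subsets `I 0, I 1, I 2` of the items such that for
any two distinct classes `α₁ ≠ α₂` and each `l`, some item `j ∈ I l` has a partial sum
`p_{jα₁}^1 + … + p_{jα₁}^m ≠ p_{jα₂}^1 + … + p_{jα₂}^m` for some `m ∈ {1,…,c j − 1}`;
(B3) `π α > 0` for every class.
Then the item response probabilities and the class proportions are identifiable up to a
permutation of the class labels. -/
theorem latent_class_multicategory_identifiability
    (M J : ℕ) (hM : M > 2) (c : Fin J → ℕ)
    (p : (j : Fin J) → Fin M → Fin (c j) → ℝ) (π : Fin M → ℝ)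
    (hp0 : ∀ j α y, 0 ≤ p j α y) (hp1 : ∀ j α, ∑ y, p j α y = 1)
    (hπ1 : ∑ α, π α = 1)
    (hB1 : ∀ j : Fin J, (Set.range (fun α : Fin M => p j α)).ncard = 2)
    (I : Fin 3 → Finset (Fin J))
    (hdisj : ∀ l l' : Fin 3, l ≠ l' → Disjoint (I l) (I l'))
    (hB2 : ∀ α₁ α₂ : Fin M, α₁ ≠ α₂ → ∀ l : Fin 3,
      ∃ j ∈ I l, ∃ m : ℕ, 1 ≤ m ∧ m ≤ c j - 1 ∧
        (∑ y ∈ Finset.univ.filter (fun y : Fin (c j) => (y : ℕ) < m), p j α₁ y) ≠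
        (∑ y ∈ Finset.univ.filter (fun y : Fin (c j) => (y : ℕ) < m), p j α₂ y))
    (hB3 : ∀ α, 0 < π α) :
    ∀ (p' : (j : Fin J) → Fin M → Fin (c j) → ℝ) (π' : Fin M → ℝ),
      (∀ j α y, 0 ≤ p' j α y) → (∀ j α, ∑ y, p' j α y = 1) →
      (∀ α, 0 ≤ π' α) → (∑ α, π' α = 1) →
      (∀ y : (j : Fin J) → Fin (c j),
        ∑ α, π α * ∏ j, p j α (y j) = ∑ α, π' α * ∏ j, p' j α (y j)) →
      ∃ σ : Equiv.Perm (Fin M),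
        (∀ j α, p' j (σ α) = p j α) ∧ (∀ α, π' (σ α) = π α) := by
  classical
  intro p' π' hp'0 hp'1 hπ'0 hπ'1 hmix
  -- the weighted marginalization workhorse
  have mixW : ∀ (W : ∀ j : Fin J, Fin (c j) → ℝ),
      ∑ α, π α * ∏ j, (∑ t, p j α t * W j t)
        = ∑ β, π' β * ∏ j, (∑ t, p' j β t * W j t) := by
    intro W
    have key : ∀ (q : (j : Fin J) → Fin M → Fin (c j) → ℝ) (wt : Fin M → ℝ),
        ∑ α, wt α * ∏ j, (∑ t, q j α t * W j t)
          = ∑ ω : ((j : Fin J) → Fin (c j)),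
              (∑ α, wt α * ∏ j, q j α (ω j)) * ∏ j, W j (ω j) := by
      intro q wt
      have h1 : ∀ α, ∏ j, (∑ t, q j α t * W j t)
          = ∑ ω : ((j : Fin J) → Fin (c j)), ∏ j, (q j α (ω j) * W j (ω j)) :=
        fun α => Fintype.prod_sum _
      rw [Finset.sum_congr rfl fun α _ => by rw [h1 α]]
      simp only [Finset.mul_sum, Finset.sum_mul]
      rw [Finset.sum_comm]
      exact Finset.sum_congr rfl fun ω _ => Finset.sum_congr rfl fun α _ => by
        rw [Finset.prod_mul_distrib]; ring
    rw [key p π, key p' π']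
    exact Finset.sum_congr rfl fun ω _ => by rw [hmix ω]
  -- three-block marginal distributions agree
  have marg3 : ∀ (S0 S1 S2 : Finset (Fin J)) (_ : Disjoint S0 S1) (_ : Disjoint S0 S2)
      (_ : Disjoint S1 S2) (x : ∀ j : {j // j ∈ S0}, Fin (c j.1))
      (y : ∀ j : {j // j ∈ S1}, Fin (c j.1)) (z : ∀ j : {j // j ∈ S2}, Fin (c j.1)),
      ∑ α, π α * (lcmiA c p S0 α x * lcmiA c p S1 α y * lcmiA c p S2 α z)
        = ∑ β, π' β * (lcmiA c p' S0 β x * lcmiA c p' S1 β y * lcmiA c p' S2 β z) := by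
    intro S0 S1 S2 h01 h02 h12 x y z
    set W : ∀ j : Fin J, Fin (c j) → ℝ := fun j t =>
      if h : j ∈ S0 then (if x ⟨j, h⟩ = t then 1 else 0)
      else if h : j ∈ S1 then (if y ⟨j, h⟩ = t then 1 else 0)
      else if h : j ∈ S2 then (if z ⟨j, h⟩ = t then 1 else 0) else 1 with hW
    have hsum : ∀ (q : (j : Fin J) → Fin M → Fin (c j) → ℝ)
        (hq1 : ∀ j α, ∑ t, q j α t = 1) (α : Fin M) (j : Fin J),
        ∑ t, q j α t * W j t
          = if h : j ∈ S0 then q j α (x ⟨j, h⟩) else if h : j ∈ S1 then q j α (y ⟨j, h⟩)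
            else if h : j ∈ S2 then q j α (z ⟨j, h⟩) else 1 := by
      intro q hq1 α j
      by_cases h0 : j ∈ S0
      · simp only [hW, dif_pos h0]
        simp [mul_ite, Finset.sum_ite_eq]
      · by_cases h1 : j ∈ S1
        · simp only [hW, dif_neg h0, dif_pos h1]
          simp [mul_ite, Finset.sum_ite_eq]
        · by_cases h2 : j ∈ S2
          · simp only [hW, dif_neg h0, dif_neg h1, dif_pos h2]
            simp [mul_ite, Finset.sum_ite_eq]
          · simp only [hW, dif_neg h0, dif_neg h1, dif_neg h2]
            simp [hq1 j α]
    have hprod : ∀ (q : (j : Fin J) → Fin M → Fin (c j) → ℝ)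
        (hq1 : ∀ j α, ∑ t, q j α t = 1) (α : Fin M),
        ∏ j, (∑ t, q j α t * W j t)
          = lcmiA c q S0 α x * lcmiA c q S1 α y * lcmiA c q S2 α z := by
      intro q hq1 α
      rw [Finset.prod_congr rfl fun j _ => hsum q hq1 α j]
      exact lcmi_split3 S0 S1 S2 h01 h02 h12 (fun j => q j.1 α (x j))
        (fun j => q j.1 α (y j)) (fun j => q j.1 α (z j))
    calc ∑ α, π α * (lcmiA c p S0 α x * lcmiA c p S1 α y * lcmiA c p S2 α z)
        = ∑ α, π α * ∏ j, (∑ t, p j α t * W j t) :=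
          Finset.sum_congr rfl fun α _ => by rw [hprod p hp1 α]
      _ = ∑ β, π' β * ∏ j, (∑ t, p' j β t * W j t) := mixW W
      _ = ∑ β, π' β * (lcmiA c p' S0 β x * lcmiA c p' S1 β y * lcmiA c p' S2 β z) :=
          Finset.sum_congr rfl fun β _ => by rw [hprod p' hp'1 β]
  -- item-level dual functionals
  have hud' : ∀ (j : Fin J) (α : Fin M), ∃ u : Fin (c j) → ℝ, ∀ γ,
      (p j γ = p j α → ∑ t, u t * p j γ t = 1) ∧
      (p j γ ≠ p j α → ∑ t, u t * p j γ t = 0) :=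
    fun j α => lcmi_item_dual (fun δ => p j δ) (hp1 j) (hB1 j) α
  choose ud hud using hud'
  -- separation of classes within each block
  have hsep : ∀ (l : Fin 3) (γ α : Fin M), γ ≠ α → ∃ j ∈ I l, p j γ ≠ p j α := by
    intro l γ α hne
    obtain ⟨j, hj, m, _, _, hne'⟩ := hB2 γ α hne l
    exact ⟨j, hj, fun hc => hne' (by rw [hc])⟩
  -- block-level dual functionals
  set U : (l : Fin 3) → Fin M → (∀ j : {j // j ∈ I l}, Fin (c j.1)) → ℝ :=
    fun l α x => ∏ j : {j // j ∈ I l}, ud j.1 α (x j) with hUdef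
  have hU : ∀ (l : Fin 3) (α γ : Fin M),
      ∑ x : (∀ j : {j // j ∈ I l}, Fin (c j.1)), U l α x * lcmiA c p (I l) γ x
        = if α = γ then 1 else 0 := by
    intro l α γ
    have h1 : ∀ x : (∀ j : {j // j ∈ I l}, Fin (c j.1)),
        U l α x * lcmiA c p (I l) γ x
          = ∏ j : {j // j ∈ I l}, (ud j.1 α (x j) * p j.1 γ (x j)) := by
      intro x
      rw [show U l α x * lcmiA c p (I l) γ x
          = (∏ j : {j // j ∈ I l}, ud j.1 α (x j)) * ∏ j : {j // j ∈ I l}, p j.1 γ (x j)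
          from rfl, ← Finset.prod_mul_distrib]
    rw [Finset.sum_congr rfl fun x _ => h1 x,
      lcmi_pi_sum (I l) (fun j t => ud j.1 α t * p j.1 γ t)]
    by_cases h : α = γ
    · rw [if_pos h]
      exact Finset.prod_eq_one fun j _ => (hud j.1 α γ).1 (by rw [h])
    · rw [if_neg h]
      obtain ⟨j, hj, hne⟩ := hsep l γ α (fun hc => h hc.symm)
      exact Finset.prod_eq_zero (Finset.mem_univ (⟨j, hj⟩ : {j // j ∈ I l}))
        ((hud j α γ).2 hne)
  -- apply the core uniqueness lemma to the three blocks
  have h01 := hdisj 0 1 (by decide)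
  have h02 := hdisj 0 2 (by decide)
  have h12 := hdisj 1 2 (by decide)
  obtain ⟨σ, hA0, hA1, hA2, hπσ⟩ := lcmi_core_unique
    (lcmiA c p (I 0)) (lcmiA c p' (I 0)) (lcmiA c p (I 1)) (lcmiA c p' (I 1))
    (lcmiA c p (I 2)) (lcmiA c p' (I 2)) π π' (U 0) (U 1) (U 2)
    (hU 0) (hU 1) (hU 2)
    (lcmiA_norm p hp1 (I 0)) (lcmiA_norm p hp1 (I 1)) (lcmiA_norm p hp1 (I 2))
    (lcmiA_norm p' hp'1 (I 0)) (lcmiA_norm p' hp'1 (I 1)) (lcmiA_norm p' hp'1 (I 2))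
    hB3 (fun x y z => marg3 (I 0) (I 1) (I 2) h01 h02 h12 x y z)
  -- recover the individual item probabilities
  have hitem : ∀ (j0 : Fin J) (γ : Fin M), p' j0 (σ γ) = p j0 γ := by
    intro j0 γ
    suffices h : ∀ (l : Fin 3), j0 ∉ I l →
        (∀ α, lcmiA c p' (I l) (σ α) = lcmiA c p (I l) α) → p' j0 (σ γ) = p j0 γ by
      by_cases hj : j0 ∈ I 0
      · exact h 1 (Finset.disjoint_left.mp h01 hj) hA1
      · exact h 0 hj hA0
    intro l hj0 hAl
    funext t
    have hd1 : Disjoint (I l) ({j0} : Finset (Fin J)) :=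
      Finset.disjoint_singleton_right.mpr hj0
    have hd2 : Disjoint (I l) (∅ : Finset (Fin J)) := Finset.disjoint_empty_right _
    have hd3 : Disjoint ({j0} : Finset (Fin J)) (∅ : Finset (Fin J)) :=
      Finset.disjoint_empty_right _
    set yt : ∀ j : {j // j ∈ ({j0} : Finset (Fin J))}, Fin (c j.1) :=
      fun j => Fin.cast (congrArg c (Finset.mem_singleton.mp j.2).symm) t with hyt
    set z0 : ∀ j : {j // j ∈ (∅ : Finset (Fin J))}, Fin (c j.1) :=
      fun j => absurd j.2 (Finset.notMem_empty _) with hz0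
    have hsing : ∀ (q : (j : Fin J) → Fin M → Fin (c j) → ℝ) (α : Fin M),
        lcmiA c q ({j0} : Finset (Fin J)) α yt = q j0 α t := by
      intro q α
      haveI : Subsingleton {j // j ∈ ({j0} : Finset (Fin J))} :=
        ⟨fun a b => Subtype.ext ((Finset.mem_singleton.mp a.2).trans
          (Finset.mem_singleton.mp b.2).symm)⟩
      have h2 := Fintype.prod_subsingleton
        (fun j : {j // j ∈ ({j0} : Finset (Fin J))} => q j.1 α (yt j))
        ⟨j0, Finset.mem_singleton_self j0⟩
      rw [show lcmiA c q ({j0} : Finset (Fin J)) α yt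
          = ∏ j : {j // j ∈ ({j0} : Finset (Fin J))}, q j.1 α (yt j) from rfl, h2]
      congr 1
    have hempty : ∀ (q : (j : Fin J) → Fin M → Fin (c j) → ℝ) (α : Fin M),
        lcmiA c q (∅ : Finset (Fin J)) α z0 = 1 := fun q α =>
      Finset.prod_eq_one fun j _ => absurd j.2 (Finset.notMem_empty _)
    have hm : ∀ x : (∀ j : {j // j ∈ I l}, Fin (c j.1)),
        ∑ α, π α * (lcmiA c p (I l) α x * p j0 α t)
          = ∑ β, π' β * (lcmiA c p' (I l) β x * p' j0 β t) := by
      intro x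
      calc ∑ α, π α * (lcmiA c p (I l) α x * p j0 α t)
          = ∑ α, π α * (lcmiA c p (I l) α x * lcmiA c p {j0} α yt * lcmiA c p ∅ α z0) :=
            Finset.sum_congr rfl fun α _ => by rw [hsing p α, hempty p α, mul_one]
        _ = ∑ β, π' β * (lcmiA c p' (I l) β x * lcmiA c p' {j0} β yt * lcmiA c p' ∅ β z0) :=
            marg3 (I l) {j0} ∅ hd1 hd2 hd3 x yt z0
        _ = ∑ β, π' β * (lcmiA c p' (I l) β x * p' j0 β t) :=
            Finset.sum_congr rfl fun β _ => by rw [hsing p' β, hempty p' β, mul_one]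
    have swap : ∀ (q : (j : Fin J) → Fin M → Fin (c j) → ℝ) (wt : Fin M → ℝ)
        (k : Fin M → ℝ),
        ∑ x : (∀ j : {j // j ∈ I l}, Fin (c j.1)),
            U l γ x * (∑ α, wt α * (lcmiA c q (I l) α x * k α))
          = ∑ α, (wt α * k α) *
              (∑ x : (∀ j : {j // j ∈ I l}, Fin (c j.1)), U l γ x * lcmiA c q (I l) α x) := by
      intro q wt k
      simp only [Finset.mul_sum]
      rw [Finset.sum_comm]
      exact Finset.sum_congr rfl fun α _ => Finset.sum_congr rfl fun x _ => by ring
    have hL : ∑ x : (∀ j : {j // j ∈ I l}, Fin (c j.1)),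
        U l γ x * (∑ α, π α * (lcmiA c p (I l) α x * p j0 α t)) = π γ * p j0 γ t := by
      rw [swap p π (fun α => p j0 α t)]
      rw [Finset.sum_eq_single γ (fun α _ h => by
          rw [hU l γ α, if_neg (fun hc => h hc.symm), mul_zero])
        (fun h => absurd (Finset.mem_univ _) h), hU l γ γ, if_pos rfl, mul_one]
    have hR : ∑ x : (∀ j : {j // j ∈ I l}, Fin (c j.1)),
        U l γ x * (∑ β, π' β * (lcmiA c p' (I l) β x * p' j0 β t))
          = π' (σ γ) * p' j0 (σ γ) t := by
      rw [swap p' π' (fun β => p' j0 β t)]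
      have hrw : ∀ β, (∑ x : (∀ j : {j // j ∈ I l}, Fin (c j.1)),
          U l γ x * lcmiA c p' (I l) β x) = if γ = σ.symm β then 1 else 0 := by
        intro β
        have h1 : lcmiA c p' (I l) β = lcmiA c p (I l) (σ.symm β) := by
          have := hAl (σ.symm β)
          rwa [Equiv.apply_symm_apply] at this
        rw [h1]
        exact hU l γ (σ.symm β)
      rw [Finset.sum_eq_single (σ γ) (fun β _ h => by
          rw [hrw β, if_neg (fun hc : γ = σ.symm β =>
            h (by rw [hc, Equiv.apply_symm_apply])), mul_zero])
        (fun h => absurd (Finset.mem_univ _) h), hrw (σ γ),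
        if_pos (by rw [Equiv.symm_apply_apply]), mul_one]
    have hfin : π γ * p j0 γ t = π γ * p' j0 (σ γ) t := by
      rw [← hL, Finset.sum_congr rfl fun x _ => by rw [hm x], hR, hπσ γ]
    exact (mul_left_cancel₀ (hB3 γ).ne' hfin).symm
  exact ⟨σ, hitem, hπσ⟩
end

section
/- Consider a latent class model whose latent classes are attribute profiles α = (α¹,…,α^K) with α^k ∈ {1,…,d_k}, so that there are M = Π_{k=1}^K d_k classes, with J items. Suppose that for each attribute k = 1,…,K there exist three subsets of items I_{1,k}, I_{2,k}, I_{3,k}, all 3K subsets pairwise disjoint, satisfying: (C1) for every item j ∈ I_{i,k}, the conditional response distribution p_{jα} depends on α only through α^k; (C2) the reduced T-matrix T_{I_{i,k}} — with rows indexed by the response patterns of the items in I_{i,k}, columns indexed by the d_k possible values of α^k, and entry Π_{j∈I_{i,k}} p_{j,α^k}^{y^j} — has full column rank d_k; (C3) π_α > 0 for every class α. Then the item response probabilities p_{jα}^k and the class proportions π_α are identifiable up to a permutation of the class labels. -/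
open Finset

lemma prod_ite_eq_ite_forall {ι : Type*} [Fintype ι] [DecidableEq ι]
    {β : ι → Type*} [∀ i, DecidableEq (β i)] (f g : (i : ι) → β i) :
    (∏ i, (if f i = g i then (1:ℝ) else 0)) = if f = g then 1 else 0 := by
  by_cases h : f = g
  · simp [h]
  · obtain ⟨i, hi⟩ := Function.ne_iff.mp h
    rw [if_neg h]
    exact Finset.prod_eq_zero (mem_univ i) (by simp [hi])

lemma sum_pi_prod {J : ℕ} (c : Fin J → ℕ) (G : (j : Fin J) → Fin (c j) → ℝ) :
    ∑ ω : (j : Fin J) → Fin (c j), ∏ j, G j (ω j) = ∏ j, ∑ v, G j v := by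
  rw [Finset.prod_univ_sum, Fintype.piFinset_univ]

lemma exists_dual {A X : Type*} [Fintype A] [Fintype X] [DecidableEq A] [DecidableEq X]
    (g : A → X → ℝ) (hg : LinearIndependent ℝ g) :
    ∃ h : A → X → ℝ, ∀ v w, ∑ x, h v x * g w x = if v = w then 1 else 0 := by
  classical
  let T : (A → ℝ) →ₗ[ℝ] (X → ℝ) :=
    { toFun := fun l => ∑ v, l v • g v
      map_add' := by intro u v; simp [add_smul, Finset.sum_add_distrib]
      map_smul' := by intro r u; simp [smul_smul, Finset.smul_sum] }
  have hker : LinearMap.ker T = ⊥ := by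
    rw [LinearMap.ker_eq_bot']
    intro l hl
    funext v
    exact (Fintype.linearIndependent_iff.mp hg) l hl v
  obtain ⟨S, hS⟩ := LinearMap.exists_leftInverse_of_injective T hker
  set e : X → (X → ℝ) := fun x => Pi.single x (1:ℝ) with he
  refine ⟨fun v x => S (e x) v, fun v w => ?_⟩
  have key : ∑ x, g w x • e x = g w := by
    funext y
    rw [Finset.sum_apply]
    rw [Finset.sum_eq_single y]
    · simp [he]
    · intro x _ hxy; simp [he, Pi.single_apply, Ne.symm hxy]
    · intro h; exact absurd (mem_univ y) h
  have hT : T (Pi.single w (1:ℝ)) = g w := by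
    have hrfl : T (Pi.single w (1:ℝ)) = ∑ u, (Pi.single w (1:ℝ) : A → ℝ) u • g u := rfl
    rw [hrfl]
    rw [Finset.sum_eq_single w]
    · simp
    · intro u _ hu; simp [Pi.single_apply, hu]
    · intro h; exact absurd (mem_univ w) h
  have h2 : S (g w) = Pi.single w (1:ℝ) := by
    rw [← hT]
    have := LinearMap.congr_fun hS (Pi.single w (1:ℝ))
    simpa using this
  calc ∑ x, S (e x) v * g w x = ∑ x, (g w x • S (e x)) v := by
        refine Finset.sum_congr rfl fun x _ => ?_
        simp [mul_comm]
    _ = (∑ x, g w x • S (e x)) v := by rw [Finset.sum_apply]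
    _ = (S (∑ x, g w x • e x)) v := by rw [map_sum]; simp
    _ = (S (g w)) v := by rw [key]
    _ = if v = w then 1 else 0 := by rw [h2, Pi.single_apply]

set_option maxHeartbeats 1000000 in
lemma sum_prod_restrict {J : ℕ} {c : Fin J → ℕ} {ι : Type*} [DecidableEq ι]
    (s : ι → Finset (Fin J)) (t : Finset ι)
    (u : (k : ι) → ((j : s k) → Fin (c j.1)) → ℝ)
    (G : (j : Fin J) → Fin (c j) → ℝ)
    (hdisj : ∀ k ∈ t, ∀ k' ∈ t, k ≠ k' → Disjoint (s k) (s k'))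
    (hG : ∀ k ∈ t, ∀ j ∈ s k, ∀ v, G j v = 1) :
    ∑ ω : (j : Fin J) → Fin (c j),
        (∏ k ∈ t, u k (fun j => ω j.1)) * ∏ j, G j (ω j)
      = (∏ k ∈ t, ∑ x : (j : s k) → Fin (c j.1), u k x) *
        ∏ j ∈ (t.biUnion s)ᶜ, ∑ v, G j v := by
  classical
  revert hdisj hG
  induction t using Finset.induction_on generalizing G with
  | empty => intro _ _; simp [sum_pi_prod]
  | @insert k₀ t' hk₀ ih =>
    intro hdisj hG
    -- expand u k₀
    have hmem : k₀ ∈ insert k₀ t' := mem_insert_self _ _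
    have hexp : ∀ ω : (j : Fin J) → Fin (c j),
        u k₀ (fun j : s k₀ => ω j.1)
          = ∑ x : (j : s k₀) → Fin (c j.1),
              u k₀ x * ∏ j : s k₀, (if ω j.1 = x j then (1:ℝ) else 0) := by
      intro ω
      have : ∀ x : (j : s k₀) → Fin (c j.1),
          u k₀ x * ∏ j : s k₀, (if ω j.1 = x j then (1:ℝ) else 0)
            = if (fun j : s k₀ => ω j.1) = x then u k₀ x else 0 := by
        intro x
        rw [prod_ite_eq_ite_forall (fun j : s k₀ => ω j.1) x]
        by_cases h : (fun j : s k₀ => ω j.1) = x <;> simp [h]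
      rw [Finset.sum_congr rfl fun x _ => this x, Finset.sum_ite_eq]
      simp
    -- the new weight function
    have step : ∀ x : (j : s k₀) → Fin (c j.1),
        ∀ ω : (j : Fin J) → Fin (c j),
        (∏ j : s k₀, (if ω j.1 = x j then (1:ℝ) else 0)) * ∏ j, G j (ω j)
          = ∏ j, (fun j v => if h : j ∈ s k₀ then (if v = x ⟨j, h⟩ then (1:ℝ) else 0)
                    else G j v) j (ω j) := by
      intro x ω
      set G' := fun j v => if h : j ∈ s k₀ then (if v = x ⟨j, h⟩ then (1:ℝ) else 0)
                    else G j v with hG'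
      have e1 : ∏ j, G' j (ω j) = (∏ j ∈ s k₀, G' j (ω j)) * ∏ j ∈ (s k₀)ᶜ, G' j (ω j) :=
        (Finset.prod_mul_prod_compl _ _).symm
      have e2 : ∏ j ∈ s k₀, G' j (ω j) = ∏ j : s k₀, (if ω j.1 = x j then (1:ℝ) else 0) := by
        rw [← Finset.prod_coe_sort (s k₀) (fun j => G' j (ω j))]
        refine Finset.prod_congr rfl fun j _ => ?_
        simp only [hG', dif_pos j.2]
      have e3 : ∏ j ∈ (s k₀)ᶜ, G' j (ω j) = ∏ j ∈ (s k₀)ᶜ, G j (ω j) := by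
        refine Finset.prod_congr rfl fun j hj => ?_
        simp only [hG', dif_neg (by simpa using hj)]
      have e4 : ∏ j, G j (ω j) = ∏ j ∈ (s k₀)ᶜ, G j (ω j) := by
        rw [← Finset.prod_mul_prod_compl (s k₀) (fun j => G j (ω j))]
        rw [Finset.prod_eq_one fun j hj => hG k₀ hmem j hj (ω j), one_mul]
      rw [e1, e2, e3, ← e4]
    have hne : ∀ k ∈ t', k₀ ≠ k := by
      intro k hk h; exact hk₀ (h ▸ hk)
    have hdisj' : ∀ k ∈ t', ∀ k' ∈ t', k ≠ k' → Disjoint (s k) (s k') :=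
      fun k hk k' hk' h => hdisj k (mem_insert_of_mem hk) k' (mem_insert_of_mem hk') h
    have hdisj0 : ∀ k ∈ t', Disjoint (s k₀) (s k) :=
      fun k hk => hdisj k₀ hmem k (mem_insert_of_mem hk) (hne k hk)
    have hsub : Disjoint (s k₀) (t'.biUnion s) := by
      rw [Finset.disjoint_biUnion_right]
      exact fun k hk => hdisj0 k hk
    have hsplit : (t'.biUnion s)ᶜ = s k₀ ∪ ((insert k₀ t').biUnion s)ᶜ := by
      ext j
      simp only [mem_compl, mem_union, biUnion_insert]
      have hd : j ∈ s k₀ → j ∉ t'.biUnion s := fun h => Finset.disjoint_left.mp hsub h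
      tauto
    have hdisj2 : Disjoint (s k₀) (((insert k₀ t').biUnion s)ᶜ) := by
      rw [Finset.disjoint_left]
      intro j hj hjc
      exact (mem_compl.mp hjc) (mem_biUnion.mpr ⟨k₀, hmem, hj⟩)
    calc ∑ ω : (j : Fin J) → Fin (c j),
        (∏ k ∈ insert k₀ t', u k (fun j : s k => ω j.1)) * ∏ j, G j (ω j)
        = ∑ ω : (j : Fin J) → Fin (c j), ∑ x : (j : s k₀) → Fin (c j.1),
            u k₀ x * ((∏ k ∈ t', u k (fun j : s k => ω j.1)) * ∏ j, (fun j v => if h : j ∈ s k₀ then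
                (if v = x ⟨j, h⟩ then (1:ℝ) else 0) else G j v) j (ω j)) := by
          refine Finset.sum_congr rfl fun ω _ => ?_
          rw [Finset.prod_insert hk₀, hexp ω, Finset.sum_mul, Finset.sum_mul]
          refine Finset.sum_congr rfl fun x _ => ?_
          rw [← step x ω]
          ring
      _ = ∑ x : (j : s k₀) → Fin (c j.1), u k₀ x *
            ((∏ k ∈ t', ∑ y : (j : s k) → Fin (c j.1), u k y) *
              ∏ j ∈ (t'.biUnion s)ᶜ, ∑ v, (fun j v => if h : j ∈ s k₀ then
                (if v = x ⟨j, h⟩ then (1:ℝ) else 0) else G j v) j v) := by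
          rw [Finset.sum_comm]
          refine Finset.sum_congr rfl fun x _ => ?_
          rw [← Finset.mul_sum]
          congr 1
          refine ih (fun j v => if h : j ∈ s k₀ then
            (if v = x ⟨j, h⟩ then (1:ℝ) else 0) else G j v) hdisj' ?_
          intro k hk j hj v
          have hj0 : j ∉ s k₀ := Finset.disjoint_right.mp (hdisj0 k hk) hj
          simp only [dif_neg hj0]
          exact hG k (mem_insert_of_mem hk) j hj v
      _ = ∑ x : (j : s k₀) → Fin (c j.1), u k₀ x *
            ((∏ k ∈ t', ∑ y : (j : s k) → Fin (c j.1), u k y) *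
              ∏ j ∈ ((insert k₀ t').biUnion s)ᶜ, ∑ v, G j v) := by
          refine Finset.sum_congr rfl fun x _ => ?_
          congr 2
          rw [hsplit, Finset.prod_union hdisj2]
          have h1 : ∏ j ∈ s k₀, (∑ v, (fun j v => if h : j ∈ s k₀ then
                (if v = x ⟨j, h⟩ then (1:ℝ) else 0) else G j v) j v) = 1 := by
            refine Finset.prod_eq_one fun j hj => ?_
            simp only [dif_pos hj]
            simp
          have h2 : ∀ j ∈ ((insert k₀ t').biUnion s)ᶜ,
              (∑ v, (fun j v => if h : j ∈ s k₀ then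
                (if v = x ⟨j, h⟩ then (1:ℝ) else 0) else G j v) j v) = ∑ v, G j v := by
            intro j hj
            have : j ∉ s k₀ := by
              intro hb
              exact (mem_compl.mp hj) (by rw [biUnion_insert]; exact mem_union_left _ hb)
            simp only [dif_neg this]
          rw [h1, one_mul]
          exact Finset.prod_congr rfl h2
      _ = (∏ k ∈ insert k₀ t', ∑ x : (j : s k) → Fin (c j.1), u k x) *
          ∏ j ∈ ((insert k₀ t').biUnion s)ᶜ, ∑ v, G j v := by
          rw [Finset.prod_insert hk₀, ← Finset.sum_mul, mul_assoc]

set_option maxHeartbeats 1000000 in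
lemma core_three_view {A X Y Z : Type*} [Fintype A] [Fintype X] [Fintype Y] [Fintype Z]
    [DecidableEq A]
    (π π' : A → ℝ) (a a' : A → X → ℝ) (b b' : A → Y → ℝ) (c c' : A → Z → ℝ)
    (ha : A → X → ℝ) (hb : A → Y → ℝ) (hc : A → Z → ℝ)
    (haa : ∀ γ α, ∑ x, ha γ x * a α x = if γ = α then 1 else 0)
    (hbb : ∀ γ α, ∑ y, hb γ y * b α y = if γ = α then 1 else 0)
    (hcc : ∀ γ α, ∑ z, hc γ z * c α z = if γ = α then 1 else 0)
    (Na Nb Nc : ℝ) (hNa : Na ≠ 0) (hNb : Nb ≠ 0) (hNc : Nc ≠ 0)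
    (hsa : ∀ α, ∑ x, a α x = Na) (hsa' : ∀ α, ∑ x, a' α x = Na)
    (hsb : ∀ α, ∑ y, b α y = Nb) (hsb' : ∀ α, ∑ y, b' α y = Nb)
    (hsc : ∀ α, ∑ z, c α z = Nc) (hsc' : ∀ α, ∑ z, c' α z = Nc)
    (hπ : ∀ α, π α ≠ 0)
    (heq : ∀ x y z, ∑ α, π α * (a α x * b α y * c α z)
                  = ∑ α, π' α * (a' α x * b' α y * c' α z)) :
    ∃ σ : Equiv.Perm A, ∀ γ,
      π' (σ γ) = π γ ∧ a' (σ γ) = a γ ∧ b' (σ γ) = b γ ∧ c' (σ γ) = c γ := by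
  classical
  have collapse : ∀ (γ δ : A) (w : A → ℝ) (f : A → X → ℝ) (g : A → Y → ℝ) (h : A → ℝ),
      ∑ x, ∑ y, (ha γ x * hb δ y) * (∑ α, w α * (f α x * g α y * h α))
        = ∑ α, w α * ((∑ x, ha γ x * f α x) * (∑ y, hb δ y * g α y) * h α) := by
    intro γ δ w f g h
    have e1 : ∀ x, ∑ y, (ha γ x * hb δ y) * (∑ α, w α * (f α x * g α y * h α))
        = ∑ α, (w α * h α * (ha γ x * f α x)) * (∑ y, hb δ y * g α y) := by
      intro x
      calc ∑ y, (ha γ x * hb δ y) * (∑ α, w α * (f α x * g α y * h α))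
          = ∑ y, ∑ α, (ha γ x * hb δ y) * (w α * (f α x * g α y * h α)) :=
            Finset.sum_congr rfl fun y _ => Finset.mul_sum _ _ _
        _ = ∑ α, ∑ y, (ha γ x * hb δ y) * (w α * (f α x * g α y * h α)) :=
            Finset.sum_comm
        _ = ∑ α, (w α * h α * (ha γ x * f α x)) * (∑ y, hb δ y * g α y) := by
            refine Finset.sum_congr rfl fun α _ => ?_
            rw [Finset.mul_sum]
            exact Finset.sum_congr rfl fun y _ => by ring
    calc ∑ x, ∑ y, (ha γ x * hb δ y) * (∑ α, w α * (f α x * g α y * h α))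
        = ∑ x, ∑ α, (w α * h α * (ha γ x * f α x)) * (∑ y, hb δ y * g α y) :=
          Finset.sum_congr rfl fun x _ => e1 x
      _ = ∑ α, ∑ x, (w α * h α * (ha γ x * f α x)) * (∑ y, hb δ y * g α y) :=
          Finset.sum_comm
      _ = ∑ α, w α * ((∑ x, ha γ x * f α x) * (∑ y, hb δ y * g α y) * h α) := by
          refine Finset.sum_congr rfl fun α _ => ?_
          rw [← Finset.sum_mul, ← Finset.mul_sum]
          ring
  have star : ∀ γ δ z, ∑ β, π' β * ((∑ x, ha γ x * a' β x) * (∑ y, hb δ y * b' β y) * c' β z)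
      = if γ = δ then π γ * c γ z else 0 := by
    intro γ δ z
    have h1 := collapse γ δ π a b (fun α => c α z)
    have h2 := collapse γ δ π' a' b' (fun α => c' α z)
    have h12 : ∑ x, ∑ y, (ha γ x * hb δ y) * (∑ α, π α * (a α x * b α y * c α z))
        = ∑ x, ∑ y, (ha γ x * hb δ y) * (∑ α, π' α * (a' α x * b' α y * c' α z)) :=
      Finset.sum_congr rfl fun x _ => Finset.sum_congr rfl fun y _ => by rw [heq x y z]
    rw [h1, h2] at h12
    rw [← h12]
    have hterm : ∀ α, π α * ((∑ x, ha γ x * a α x) * (∑ y, hb δ y * b α y) * c α z)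
        = π α * ((if γ = α then (1:ℝ) else 0) * (if δ = α then (1:ℝ) else 0) * c α z) := by
      intro α; rw [haa, hbb]
    rw [Finset.sum_congr rfl fun α _ => hterm α, Finset.sum_eq_single γ]
    · rw [if_pos rfl]
      by_cases h : γ = δ
      · rw [if_pos h.symm, if_pos h]; ring
      · rw [if_neg (fun hh => h hh.symm), if_neg h]; ring
    · intro α _ hαγ
      rw [if_neg (fun hh => hαγ hh.symm)]; ring
    · intro h; exact absurd (mem_univ γ) h
  -- matrices
  set E : Matrix A A ℝ := Matrix.of fun γ β => π' β * (∑ x, ha γ x * a' β x) with hE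
  set F : Matrix A A ℝ := Matrix.of fun δ β => ∑ y, hb δ y * b' β y with hF
  have hEF : E * F.transpose = Matrix.diagonal π := by
    ext γ δ
    have hzsum : ∑ z, (if γ = δ then π γ * c γ z else 0) = (if γ = δ then π γ else 0) * Nc := by
      by_cases h : γ = δ
      · simp only [if_pos h]
        rw [← Finset.mul_sum, hsc]
      · simp [h]
    have hl : ∑ z, ∑ β, π' β * ((∑ x, ha γ x * a' β x) * (∑ y, hb δ y * b' β y) * c' β z)
        = (∑ β, E γ β * F.transpose β δ) * Nc := by
      rw [Finset.sum_comm, Finset.sum_mul]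
      refine Finset.sum_congr rfl fun β _ => ?_
      have h3 : ∑ z, π' β * ((∑ x, ha γ x * a' β x) * (∑ y, hb δ y * b' β y) * c' β z)
          = (π' β * ((∑ x, ha γ x * a' β x) * (∑ y, hb δ y * b' β y))) * ∑ z, c' β z :=
        (Finset.sum_congr rfl fun z _ => by ring).trans (Finset.mul_sum _ _ _).symm
      rw [h3, hsc']
      simp only [hE, hF, Matrix.of_apply, Matrix.transpose_apply]
      ring
    have h2 : ∑ z, ∑ β, π' β * ((∑ x, ha γ x * a' β x) * (∑ y, hb δ y * b' β y) * c' β z)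
        = ∑ z, (if γ = δ then π γ * c γ z else 0) :=
      Finset.sum_congr rfl fun z _ => star γ δ z
    rw [hl, hzsum] at h2
    rw [Matrix.mul_apply, Matrix.diagonal_apply]
    exact mul_right_cancel₀ hNc h2
  set Dinv : Matrix A A ℝ := Matrix.diagonal (fun α => (π α)⁻¹) with hDinv
  have hDD : Matrix.diagonal π * Dinv = 1 := by
    have hfun : (fun α => π α * (π α)⁻¹) = fun _ => (1:ℝ) :=
      funext fun α => mul_inv_cancel₀ (hπ α)
    rw [hDinv, Matrix.diagonal_mul_diagonal, hfun, Matrix.diagonal_one]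
  have hE1 : E * (F.transpose * Dinv) = 1 := by
    rw [← Matrix.mul_assoc, hEF, hDD]
  have hE2 : (F.transpose * Dinv) * E = 1 := mul_eq_one_comm.mp hE1
  have hzdiag : ∀ z, E * Matrix.diagonal (fun β => c' β z) * F.transpose
      = Matrix.diagonal (fun γ => π γ * c γ z) := by
    intro z
    ext γ δ
    rw [Matrix.mul_apply, Matrix.diagonal_apply]
    have hterm : ∀ β, (E * Matrix.diagonal (fun β => c' β z)) γ β * F.transpose β δ
        = π' β * ((∑ x, ha γ x * a' β x) * (∑ y, hb δ y * b' β y) * c' β z) := by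
      intro β
      rw [Matrix.mul_diagonal]
      simp only [hE, hF, Matrix.of_apply, Matrix.transpose_apply]
      ring
    rw [Finset.sum_congr rfl fun β _ => hterm β, star]
  have hconj : ∀ z γ β, E γ β * c' β z = c γ z * E γ β := by
    intro z γ β
    have h5 : E * Matrix.diagonal (fun β => c' β z) = Matrix.diagonal (fun γ => c γ z) * E := by
      calc E * Matrix.diagonal (fun β => c' β z)
          = E * Matrix.diagonal (fun β => c' β z) * ((F.transpose * Dinv) * E) := by
            rw [hE2, Matrix.mul_one]
        _ = (E * Matrix.diagonal (fun β => c' β z) * F.transpose) * (Dinv * E) := by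
            simp only [Matrix.mul_assoc]
        _ = Matrix.diagonal (fun γ => π γ * c γ z) * (Dinv * E) := by rw [hzdiag z]
        _ = Matrix.diagonal (fun γ => c γ z) * E := by
            have hfun2 : (fun i => π i * c i z * (π i)⁻¹) = fun i => c i z :=
              funext fun i => by
                rw [mul_comm (π i) (c i z), mul_assoc, mul_inv_cancel₀ (hπ i), mul_one]
            rw [← Matrix.mul_assoc, hDinv, Matrix.diagonal_mul_diagonal, hfun2]
    have h6 : (E * Matrix.diagonal (fun β => c' β z)) γ β
        = (Matrix.diagonal (fun γ => c γ z) * E) γ β := by rw [h5]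
    rw [Matrix.mul_diagonal, Matrix.diagonal_mul] at h6
    exact h6
  have hcol : ∀ β, ∃ γ, E γ β ≠ 0 := by
    intro β
    by_contra h
    push_neg at h
    have h1 : ((F.transpose * Dinv) * E) β β = 0 := by
      rw [Matrix.mul_apply]
      exact Finset.sum_eq_zero fun γ _ => by rw [h γ, mul_zero]
    rw [hE2] at h1
    simp [Matrix.one_apply_eq] at h1
  have hrow : ∀ γ, ∃ β, E γ β ≠ 0 := by
    intro γ
    by_contra h
    push_neg at h
    have h1 : (E * (F.transpose * Dinv)) γ γ = 0 := by
      rw [Matrix.mul_apply]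
      exact Finset.sum_eq_zero fun β _ => by rw [h β, zero_mul]
    rw [hE1] at h1
    simp [Matrix.one_apply_eq] at h1
  have hcinj : ∀ γ γ', c γ = c γ' → γ = γ' := by
    intro γ γ' h
    by_contra hne
    have h1 := hcc γ γ'
    rw [if_neg hne] at h1
    have h2 := hcc γ γ
    rw [if_pos rfl, h] at h2
    exact zero_ne_one (h1.symm.trans h2)
  have hccE : ∀ γ β, E γ β ≠ 0 → c' β = c γ := by
    intro γ β hEβ
    funext z
    exact mul_left_cancel₀ hEβ ((hconj z γ β).trans (mul_comm _ _))
  choose τ hτ using hcol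
  have hcτ : ∀ β, c' β = c (τ β) := fun β => hccE (τ β) β (hτ β)
  have hsurj : Function.Surjective τ := by
    intro γ
    obtain ⟨β, hβ⟩ := hrow γ
    exact ⟨β, hcinj _ _ ((hcτ β).symm.trans (hccE γ β hβ))⟩
  have hbij : Function.Bijective τ := Finite.surjective_iff_bijective.mp hsurj
  let σ₀ : Equiv.Perm A := Equiv.ofBijective τ hbij
  have hσ₀ : ∀ β, σ₀ β = τ β := fun β => rfl
  have hτβ₀ : ∀ γ, τ (σ₀.symm γ) = γ := by
    intro γ
    rw [← hσ₀, Equiv.apply_symm_apply]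
  have hker : ∀ γ x y, π γ * (a γ x * b γ y)
      = π' (σ₀.symm γ) * (a' (σ₀.symm γ) x * b' (σ₀.symm γ) y) := by
    intro γ x y
    have hL : ∑ z, hc γ z * (∑ α, π α * (a α x * b α y * c α z))
        = π γ * (a γ x * b γ y) := by
      calc ∑ z, hc γ z * (∑ α, π α * (a α x * b α y * c α z))
          = ∑ z, ∑ α, hc γ z * (π α * (a α x * b α y * c α z)) :=
            Finset.sum_congr rfl fun z _ => Finset.mul_sum _ _ _
        _ = ∑ α, ∑ z, hc γ z * (π α * (a α x * b α y * c α z)) := Finset.sum_comm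
        _ = ∑ α, (π α * (a α x * b α y)) * ∑ z, hc γ z * c α z := by
            refine Finset.sum_congr rfl fun α _ => ?_
            exact (Finset.sum_congr rfl fun z _ => by ring).trans (Finset.mul_sum _ _ _).symm
        _ = π γ * (a γ x * b γ y) := by
            rw [Finset.sum_eq_single γ]
            · rw [hcc γ γ, if_pos rfl, mul_one]
            · intro α _ hαγ
              rw [hcc γ α, if_neg (fun hh => hαγ hh.symm), mul_zero]
            · intro h; exact absurd (mem_univ γ) h
    have hR : ∑ z, hc γ z * (∑ β, π' β * (a' β x * b' β y * c' β z))
        = π' (σ₀.symm γ) * (a' (σ₀.symm γ) x * b' (σ₀.symm γ) y) := by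
      calc ∑ z, hc γ z * (∑ β, π' β * (a' β x * b' β y * c' β z))
          = ∑ z, ∑ β, hc γ z * (π' β * (a' β x * b' β y * c' β z)) :=
            Finset.sum_congr rfl fun z _ => Finset.mul_sum _ _ _
        _ = ∑ β, ∑ z, hc γ z * (π' β * (a' β x * b' β y * c' β z)) := Finset.sum_comm
        _ = ∑ β, (π' β * (a' β x * b' β y)) * ∑ z, hc γ z * c' β z := by
            refine Finset.sum_congr rfl fun β _ => ?_
            exact (Finset.sum_congr rfl fun z _ => by ring).trans (Finset.mul_sum _ _ _).symm
        _ = π' (σ₀.symm γ) * (a' (σ₀.symm γ) x * b' (σ₀.symm γ) y) := by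
            rw [Finset.sum_eq_single (σ₀.symm γ)]
            · rw [hcτ, hτβ₀ γ, hcc γ γ, if_pos rfl, mul_one]
            · intro β _ hβ
              have hτβ : τ β ≠ γ := by
                intro hh
                apply hβ
                rw [← hh, ← hσ₀, Equiv.symm_apply_apply]
              rw [hcτ, hcc γ (τ β), if_neg (fun hh => hτβ hh.symm), mul_zero]
            · intro h; exact absurd (mem_univ _) h
    have hz : ∑ z, hc γ z * (∑ α, π α * (a α x * b α y * c α z))
        = ∑ z, hc γ z * (∑ β, π' β * (a' β x * b' β y * c' β z)) :=
      Finset.sum_congr rfl fun z _ => by rw [heq x y z]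
    exact hL.symm.trans (hz.trans hR)
  refine ⟨σ₀.symm, fun γ => ?_⟩
  have sum2 : ∀ (w : ℝ) (u : A → X → ℝ) (v : A → Y → ℝ) (α : A) (Ma Mb : ℝ),
      (∑ x, u α x = Ma) → (∑ y, v α y = Mb) →
      ∑ x, ∑ y, w * (u α x * v α y) = w * (Ma * Mb) := by
    intro w u v α Ma Mb hu hv
    calc ∑ x, ∑ y, w * (u α x * v α y)
        = ∑ x, (w * u α x) * ∑ y, v α y := by
          refine Finset.sum_congr rfl fun x _ => ?_
          exact (Finset.sum_congr rfl fun y _ => by ring).trans (Finset.mul_sum _ _ _).symm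
      _ = ∑ x, (w * Mb) * u α x := by
          rw [hv]
          exact Finset.sum_congr rfl fun x _ => by ring
      _ = (w * Mb) * ∑ x, u α x := (Finset.mul_sum _ _ _).symm
      _ = w * (Ma * Mb) := by rw [hu]; ring
  have hππ : π' (σ₀.symm γ) = π γ := by
    have h1 : ∑ x, ∑ y, π γ * (a γ x * b γ y) = π γ * (Na * Nb) :=
      sum2 _ _ _ _ _ _ (hsa γ) (hsb γ)
    have h2 : ∑ x, ∑ y, π' (σ₀.symm γ) * (a' (σ₀.symm γ) x * b' (σ₀.symm γ) y)
        = π' (σ₀.symm γ) * (Na * Nb) :=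
      sum2 _ _ _ _ _ _ (hsa' _) (hsb' _)
    have h3 : ∑ x, ∑ y, π γ * (a γ x * b γ y)
        = ∑ x, ∑ y, π' (σ₀.symm γ) * (a' (σ₀.symm γ) x * b' (σ₀.symm γ) y) :=
      Finset.sum_congr rfl fun x _ => Finset.sum_congr rfl fun y _ => hker γ x y
    rw [h1, h2] at h3
    exact (mul_right_cancel₀ (mul_ne_zero hNa hNb) h3).symm
  have haeq : a' (σ₀.symm γ) = a γ := by
    funext x
    have h1 : ∑ y, π γ * (a γ x * b γ y) = π γ * (a γ x * Nb) := by
      calc ∑ y, π γ * (a γ x * b γ y)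
          = (π γ * a γ x) * ∑ y, b γ y :=
            (Finset.sum_congr rfl fun y _ => by ring).trans (Finset.mul_sum _ _ _).symm
        _ = π γ * (a γ x * Nb) := by rw [hsb]; ring
    have h2 : ∑ y, π' (σ₀.symm γ) * (a' (σ₀.symm γ) x * b' (σ₀.symm γ) y)
        = π' (σ₀.symm γ) * (a' (σ₀.symm γ) x * Nb) := by
      calc ∑ y, π' (σ₀.symm γ) * (a' (σ₀.symm γ) x * b' (σ₀.symm γ) y)
          = (π' (σ₀.symm γ) * a' (σ₀.symm γ) x) * ∑ y, b' (σ₀.symm γ) y :=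
            (Finset.sum_congr rfl fun y _ => by ring).trans (Finset.mul_sum _ _ _).symm
        _ = π' (σ₀.symm γ) * (a' (σ₀.symm γ) x * Nb) := by rw [hsb']; ring
    have h3 : ∑ y, π γ * (a γ x * b γ y)
        = ∑ y, π' (σ₀.symm γ) * (a' (σ₀.symm γ) x * b' (σ₀.symm γ) y) :=
      Finset.sum_congr rfl fun y _ => hker γ x y
    rw [h1, h2, hππ] at h3
    have h4 := mul_left_cancel₀ (hπ γ) h3
    exact (mul_right_cancel₀ hNb h4).symm
  have hbeq : b' (σ₀.symm γ) = b γ := by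
    funext y
    have h1 : ∑ x, π γ * (a γ x * b γ y) = π γ * (Na * b γ y) := by
      calc ∑ x, π γ * (a γ x * b γ y)
          = (π γ * b γ y) * ∑ x, a γ x :=
            (Finset.sum_congr rfl fun x _ => by ring).trans (Finset.mul_sum _ _ _).symm
        _ = π γ * (Na * b γ y) := by rw [hsa]; ring
    have h2 : ∑ x, π' (σ₀.symm γ) * (a' (σ₀.symm γ) x * b' (σ₀.symm γ) y)
        = π' (σ₀.symm γ) * (Na * b' (σ₀.symm γ) y) := by
      calc ∑ x, π' (σ₀.symm γ) * (a' (σ₀.symm γ) x * b' (σ₀.symm γ) y)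
          = (π' (σ₀.symm γ) * b' (σ₀.symm γ) y) * ∑ x, a' (σ₀.symm γ) x :=
            (Finset.sum_congr rfl fun x _ => by ring).trans (Finset.mul_sum _ _ _).symm
        _ = π' (σ₀.symm γ) * (Na * b' (σ₀.symm γ) y) := by rw [hsa']; ring
    have h3 : ∑ x, π γ * (a γ x * b γ y)
        = ∑ x, π' (σ₀.symm γ) * (a' (σ₀.symm γ) x * b' (σ₀.symm γ) y) :=
      Finset.sum_congr rfl fun x _ => hker γ x y
    rw [h1, h2, hππ] at h3
    have h4 := mul_left_cancel₀ (hπ γ) h3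
    have h5 : Na * b γ y = Na * b' (σ₀.symm γ) y := by linarith [h4]
    exact (mul_left_cancel₀ hNa h5).symm
  have hceq : c' (σ₀.symm γ) = c γ := by
    rw [hcτ, hτβ₀ γ]
  exact ⟨hππ, haeq, hbeq, hceq⟩


set_option maxHeartbeats 2000000 in
/-- **Identifiability of a DCM with multi-level attributes via single-attribute items
(Theorem 4).**
The latent classes are the attribute profiles `α : (k : Fin K) → Fin (d k)` (so there are
`M = ∏ k, d k` classes), with `J` items; item `j` takes `c j` possible values and `p j α`
is its conditional response distribution for class `α`. For each attribute `k` there are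
three subsets of items `I 0 k, I 1 k, I 2 k`, all `3K` subsets pairwise disjoint, so that:
(C1) every item in `I i k` depends on `α` only through `α k`;
(C2) the reduced T-matrix of `I i k` — rows indexed by response patterns of the items in
`I i k`, columns indexed by the `d k` values of attribute `k`, with entry
`∏_{j ∈ I i k} p_{j,α^k}^{y^j}` (here `g v` is any attribute profile whose `k`-th
coordinate is `v`) — has full column rank `d k`;
(C3) `π α > 0` for every class.
Then the item response probabilities and the class proportions are identifiable up to a
permutation of the class labels. -/
theorem dcm_multilevel_attribute_identifiability
    (K J : ℕ) (d : Fin K → ℕ) (c : Fin J → ℕ)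
    (p : (j : Fin J) → ((k : Fin K) → Fin (d k)) → Fin (c j) → ℝ)
    (π : ((k : Fin K) → Fin (d k)) → ℝ)
    (hp0 : ∀ j α y, 0 ≤ p j α y) (hp1 : ∀ j α, ∑ y, p j α y = 1)
    (hπ1 : ∑ α, π α = 1)
    (I : Fin 3 → Fin K → Finset (Fin J))
    (hdisj : ∀ (i i' : Fin 3) (k k' : Fin K),
      (i, k) ≠ (i', k') → Disjoint (I i k) (I i' k'))
    (hC1 : ∀ (i : Fin 3) (k : Fin K), ∀ j ∈ I i k,
      ∀ α α' : (k : Fin K) → Fin (d k), α k = α' k → p j α = p j α')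
    (hC2 : ∀ (i : Fin 3) (k : Fin K)
      (g : Fin (d k) → ((k : Fin K) → Fin (d k))), (∀ v, g v k = v) →
      LinearIndependent ℝ
        (fun v : Fin (d k) =>
          (fun y : ((j : I i k) → Fin (c j.1)) => ∏ j, p j.1 (g v) (y j))))
    (hC3 : ∀ α, 0 < π α) :
    ∀ (p' : (j : Fin J) → ((k : Fin K) → Fin (d k)) → Fin (c j) → ℝ)
      (π' : ((k : Fin K) → Fin (d k)) → ℝ),
      (∀ j α y, 0 ≤ p' j α y) → (∀ j α, ∑ y, p' j α y = 1) →
      (∀ α, 0 ≤ π' α) → (∑ α, π' α = 1) →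
      (∀ y : (j : Fin J) → Fin (c j),
        ∑ α, π α * ∏ j, p j α (y j) = ∑ α, π' α * ∏ j, p' j α (y j)) →
      ∃ σ : Equiv.Perm ((k : Fin K) → Fin (d k)),
        (∀ j α, p' j (σ α) = p j α) ∧ (∀ α, π' (σ α) = π α) := by
  classical
  intro p' π' hp0' hp1' hπ0' hπ1' hmix
  -- nonemptiness facts
  have hA : Nonempty ((k : Fin K) → Fin (d k)) := by
    by_contra h
    rw [not_nonempty_iff] at h
    rw [Finset.univ_eq_empty, Finset.sum_empty] at hπ1
    exact zero_ne_one hπ1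
  obtain ⟨α₀⟩ := hA
  have hcj : ∀ j : Fin J, c j ≠ 0 := by
    intro j hj
    haveI : IsEmpty (Fin (c j)) := by rw [hj]; exact inferInstance
    have := hp1 j α₀
    rw [Finset.univ_eq_empty, Finset.sum_empty] at this
    exact zero_ne_one this
  -- blocks
  set B1 : Finset (Fin J) := Finset.univ.biUnion (I 0) with hB1
  set B2 : Finset (Fin J) := Finset.univ.biUnion (I 1) with hB2
  set B3 : Finset (Fin J) := Finset.univ.biUnion (I 2) with hB3
  set rest : Finset (Fin J) := (B1 ∪ B3)ᶜ with hrest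
  have hIdisj : ∀ (i : Fin 3) (k k' : Fin K), k ≠ k' → Disjoint (I i k) (I i k') :=
    fun i k k' h => hdisj i i k k' (fun he => h (congrArg Prod.snd he))
  have hI2 : ∀ (i i' : Fin 3) (k k' : Fin K), i ≠ i' → Disjoint (I i k) (I i' k') :=
    fun i i' k k' h => hdisj i i' k k' (fun he => h (congrArg Prod.fst he))
  have hd13 : Disjoint B1 B3 := by
    rw [hB1, Finset.disjoint_biUnion_left]
    intro k _
    rw [hB3, Finset.disjoint_biUnion_right]
    intro k' _
    exact hI2 0 2 k k' (by decide)
  have hB2rest : B2 ⊆ rest := by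
    intro j hj
    rw [hB2] at hj
    obtain ⟨k, -, hjk⟩ := Finset.mem_biUnion.mp hj
    rw [hrest, Finset.mem_compl, Finset.mem_union]
    rintro (h1 | h3)
    · obtain ⟨k', -, hjk'⟩ := Finset.mem_biUnion.mp h1
      exact Finset.disjoint_left.mp (hI2 1 0 k k' (by decide)) hjk hjk'
    · obtain ⟨k', -, hjk'⟩ := Finset.mem_biUnion.mp h3
      exact Finset.disjoint_left.mp (hI2 1 2 k k' (by decide)) hjk hjk'
  have hcompl : B1ᶜ = B3 ∪ rest := by
    ext j
    rw [Finset.mem_compl, Finset.mem_union, hrest, Finset.mem_compl, Finset.mem_union]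
    constructor
    · intro h
      by_cases h3 : j ∈ B3
      · exact Or.inl h3
      · exact Or.inr (by tauto)
    · rintro (h | h)
      · exact fun h1 => Finset.disjoint_left.mp hd13 h1 h
      · tauto
  have hd3r : Disjoint B3 rest := by
    rw [Finset.disjoint_left]
    intro j hj hjr
    rw [hrest, Finset.mem_compl] at hjr
    exact hjr (Finset.mem_union_right _ hj)
  -- partition of the full product
  have hpart : ∀ (q : (j : Fin J) → Fin (c j) → ℝ) (ω : (j : Fin J) → Fin (c j)),
      ∏ j, q j (ω j) = ((∏ j ∈ B1, q j (ω j)) * (∏ j ∈ rest, q j (ω j))) *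
        (∏ j ∈ B3, q j (ω j)) := by
    intro q ω
    rw [← Finset.prod_mul_prod_compl B1 (fun j => q j (ω j)), hcompl,
      Finset.prod_union hd3r]
    ring
  -- sums of block products
  have hsum : ∀ (t : Finset (Fin J)) (q : (j : Fin J) → Fin (c j) → ℝ),
      (∀ j ∈ t, ∑ v, q j v = 1) →
      ∑ ω : (j : Fin J) → Fin (c j), ∏ j ∈ t, q j (ω j) = ∏ j ∈ tᶜ, (c j : ℝ) := by
    intro t q hq
    have h1 : ∀ ω : (j : Fin J) → Fin (c j),
        ∏ j ∈ t, q j (ω j) = ∏ j, (fun j v => if j ∈ t then q j v else 1) j (ω j) := by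
      intro ω
      rw [← Finset.prod_mul_prod_compl t]
      have e1 : ∏ j ∈ t, (fun j v => if j ∈ t then q j v else 1) j (ω j)
          = ∏ j ∈ t, q j (ω j) :=
        Finset.prod_congr rfl fun j hj => by simp [hj]
      have e2 : ∏ j ∈ tᶜ, (fun j v => if j ∈ t then q j v else 1) j (ω j) = 1 :=
        Finset.prod_eq_one fun j hj => by simp [Finset.mem_compl.mp hj]
      rw [e1, e2, mul_one]
    have hsp := sum_pi_prod c (fun j v => if j ∈ t then q j v else 1)
    rw [Finset.sum_congr rfl fun ω _ => h1 ω, hsp]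
    rw [← Finset.prod_mul_prod_compl t (fun j => ∑ v, (fun j v => if j ∈ t then q j v else 1) j v)]
    have e3 : ∏ j ∈ t, (∑ v, (fun j v => if j ∈ t then q j v else 1) j v) = 1 :=
      Finset.prod_eq_one fun j hj => by simpa [hj] using hq j hj
    have e4 : ∏ j ∈ tᶜ, (∑ v, (fun j v => if j ∈ t then q j v else 1) j v)
        = ∏ j ∈ tᶜ, (c j : ℝ) := by
      refine Finset.prod_congr rfl fun j hj => ?_
      simp [Finset.mem_compl.mp hj]
    rw [e3, e4, one_mul]
  have hNpos : ∀ t : Finset (Fin J), (0:ℝ) < ∏ j ∈ t, (c j : ℝ) :=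
    fun t => Finset.prod_pos fun j _ =>
      Nat.cast_pos.mpr (Nat.pos_of_ne_zero (hcj j))
  -- the duals from (C2)
  have hdualex : ∀ (i : Fin 3) (k : Fin K),
      ∃ h : Fin (d k) → ((j : I i k) → Fin (c j.1)) → ℝ,
        ∀ v w, ∑ x, h v x * (∏ j : I i k, p j.1 (Function.update α₀ k w) (x j))
          = if v = w then 1 else 0 := by
    intro i k
    exact exists_dual _ (hC2 i k (fun v => Function.update α₀ k v)
      (fun v => Function.update_self k v α₀))
  choose dual dual_spec using hdualex
  -- block factorization of products over ⋃ₖ I i k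
  have hfact : ∀ (i : Fin 3) (α : (k : Fin K) → Fin (d k)) (ω : (j : Fin J) → Fin (c j)) (k : Fin K),
      ∏ j ∈ I i k, p j α (ω j)
        = ∏ j : I i k, p j.1 (Function.update α₀ k (α k)) ((fun j : I i k => ω j.1) j) := by
    intro i α ω k
    rw [← Finset.prod_coe_sort (I i k) (fun j => p j α (ω j))]
    refine Finset.prod_congr rfl fun j _ => ?_
    rw [hC1 i k j.1 j.2 (Function.update α₀ k (α k)) α (Function.update_self k (α k) α₀)]
  -- the master pairing computation
  have pairing : ∀ (i : Fin 3) (t : Finset (Fin J)), Finset.univ.biUnion (I i) ⊆ t →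
      ∀ (γ α : (k : Fin K) → Fin (d k)),
      ∑ ω : (j : Fin J) → Fin (c j),
          (∏ k, dual i k (γ k) (fun j : I i k => ω j.1)) * (∏ j ∈ t, p j α (ω j))
        = (if γ = α then 1 else 0) * ∏ j ∈ tᶜ, (c j : ℝ) := by
    intro i t ht γ α
    have hdisjI : ∀ k ∈ (Finset.univ : Finset (Fin K)), ∀ k' ∈ (Finset.univ : Finset (Fin K)),
        k ≠ k' → Disjoint (I i k) (I i k') := fun k _ k' _ h => hIdisj i k k' h
    have key := sum_prod_restrict (c := c) (I i) Finset.univ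
      (fun k => fun x : (j : I i k) → Fin (c j.1) =>
        dual i k (γ k) x * ∏ j : I i k, p j.1 (Function.update α₀ k (α k)) (x j))
      (fun j v => if j ∈ t \ Finset.univ.biUnion (I i) then p j α v else 1)
      hdisjI
      (by
        intro k _ j hj v
        have hnot : j ∉ t \ Finset.univ.biUnion (I i) := by
          rw [Finset.mem_sdiff]
          push_neg
          intro _
          exact Finset.mem_biUnion.mpr ⟨k, Finset.mem_univ k, hj⟩
        simp [hnot])
    -- identify the left-hand sides
    have lhs_eq : ∀ ω : (j : Fin J) → Fin (c j),
        (∏ k, (fun x : (j : I i k) → Fin (c j.1) =>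
            dual i k (γ k) x * ∏ j : I i k, p j.1 (Function.update α₀ k (α k)) (x j))
          (fun j : I i k => ω j.1)) *
          ∏ j, (fun j v => if j ∈ t \ Finset.univ.biUnion (I i) then p j α v else 1) j (ω j)
        = (∏ k, dual i k (γ k) (fun j : I i k => ω j.1)) * (∏ j ∈ t, p j α (ω j)) := by
      intro ω
      rw [Finset.prod_mul_distrib]
      have e1 : ∏ k, ∏ j : I i k, p j.1 (Function.update α₀ k (α k))
          ((fun j : I i k => ω j.1) j) = ∏ j ∈ Finset.univ.biUnion (I i), p j α (ω j) := by
        rw [Finset.prod_biUnion hdisjI]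
        exact Finset.prod_congr rfl fun k _ => (hfact i α ω k).symm
      have e2 : ∏ j, (fun j v => if j ∈ t \ Finset.univ.biUnion (I i) then p j α v else 1) j (ω j)
          = ∏ j ∈ t \ Finset.univ.biUnion (I i), p j α (ω j) := by
        rw [← Finset.prod_mul_prod_compl (t \ Finset.univ.biUnion (I i))]
        have f1 : ∏ j ∈ t \ Finset.univ.biUnion (I i),
            (fun j v => if j ∈ t \ Finset.univ.biUnion (I i) then p j α v else 1) j (ω j)
            = ∏ j ∈ t \ Finset.univ.biUnion (I i), p j α (ω j) :=
          Finset.prod_congr rfl fun j hj => by simp [hj]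
        have f2 : ∏ j ∈ (t \ Finset.univ.biUnion (I i))ᶜ,
            (fun j v => if j ∈ t \ Finset.univ.biUnion (I i) then p j α v else 1) j (ω j) = 1 :=
          Finset.prod_eq_one fun j hj => by simp [Finset.mem_compl.mp hj]
        rw [f1, f2, mul_one]
      rw [e1, e2, mul_assoc, mul_comm (∏ j ∈ Finset.univ.biUnion (I i), p j α (ω j)),
        Finset.prod_sdiff ht]
    rw [Finset.sum_congr rfl fun ω _ => (lhs_eq ω).symm, key]
    -- identify the right-hand sides
    have r1 : ∏ k, (∑ x : (j : I i k) → Fin (c j.1),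
        dual i k (γ k) x * ∏ j : I i k, p j.1 (Function.update α₀ k (α k)) (x j))
        = if γ = α then 1 else 0 := by
      have : ∀ k : Fin K, (∑ x : (j : I i k) → Fin (c j.1),
          dual i k (γ k) x * ∏ j : I i k, p j.1 (Function.update α₀ k (α k)) (x j))
          = if γ k = α k then (1:ℝ) else 0 := fun k => dual_spec i k (γ k) (α k)
      rw [Finset.prod_congr rfl fun k _ => this k]
      exact prod_ite_eq_ite_forall γ α
    have r2 : ∏ j ∈ (Finset.univ.biUnion (I i))ᶜ,
        (∑ v, (fun j v => if j ∈ t \ Finset.univ.biUnion (I i) then p j α v else 1) j v)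
        = ∏ j ∈ tᶜ, (c j : ℝ) := by
      have hsplit : (Finset.univ.biUnion (I i))ᶜ = (t \ Finset.univ.biUnion (I i)) ∪ tᶜ := by
        ext j
        rw [Finset.mem_compl, Finset.mem_union, Finset.mem_sdiff, Finset.mem_compl]
        by_cases hjt : j ∈ t
        · tauto
        · have : j ∉ Finset.univ.biUnion (I i) := fun hb => hjt (ht hb)
          tauto
      have hdsj : Disjoint (t \ Finset.univ.biUnion (I i)) tᶜ := by
        rw [Finset.disjoint_left]
        intro j hj hjc
        exact (Finset.mem_compl.mp hjc) (Finset.mem_sdiff.mp hj).1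
      rw [hsplit, Finset.prod_union hdsj]
      have g1 : ∏ j ∈ t \ Finset.univ.biUnion (I i),
          (∑ v, (fun j v => if j ∈ t \ Finset.univ.biUnion (I i) then p j α v else 1) j v) = 1 :=
        Finset.prod_eq_one fun j hj => by simpa [hj] using hp1 j α
      have g2 : ∏ j ∈ tᶜ,
          (∑ v, (fun j v => if j ∈ t \ Finset.univ.biUnion (I i) then p j α v else 1) j v)
          = ∏ j ∈ tᶜ, (c j : ℝ) := by
        refine Finset.prod_congr rfl fun j hj => ?_
        have : j ∉ t \ Finset.univ.biUnion (I i) := by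
          rw [Finset.mem_sdiff]
          push_neg
          intro hjt
          exact absurd hjt (Finset.mem_compl.mp hj)
        simp [this]
      rw [g1, g2, one_mul]
    rw [r1, r2]
  -- normalized pairings
  have mk_pair : ∀ (i : Fin 3) (t : Finset (Fin J)), Finset.univ.biUnion (I i) ⊆ t →
      ∀ γ α, ∑ ω : (j : Fin J) → Fin (c j),
        ((∏ j ∈ tᶜ, (c j:ℝ))⁻¹ * ∏ k, dual i k (γ k) (fun j : I i k => ω j.1)) *
          (∏ j ∈ t, p j α (ω j)) = if γ = α then 1 else 0 := by
    intro i t ht γ α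
    have h := pairing i t ht γ α
    have hN : (∏ j ∈ tᶜ, (c j:ℝ)) ≠ 0 := (hNpos tᶜ).ne'
    calc ∑ ω : (j : Fin J) → Fin (c j),
        ((∏ j ∈ tᶜ, (c j:ℝ))⁻¹ * ∏ k, dual i k (γ k) (fun j : I i k => ω j.1)) *
          (∏ j ∈ t, p j α (ω j))
        = (∏ j ∈ tᶜ, (c j:ℝ))⁻¹ * ∑ ω : (j : Fin J) → Fin (c j),
            (∏ k, dual i k (γ k) (fun j : I i k => ω j.1)) * (∏ j ∈ t, p j α (ω j)) :=
          (Finset.sum_congr rfl fun ω _ => by ring).trans (Finset.mul_sum _ _ _).symm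
      _ = (∏ j ∈ tᶜ, (c j:ℝ))⁻¹ * ((if γ = α then 1 else 0) * ∏ j ∈ tᶜ, (c j:ℝ)) := by rw [h]
      _ = if γ = α then 1 else 0 := by
          rw [mul_comm (if γ = α then (1:ℝ) else 0), ← mul_assoc, inv_mul_cancel₀ hN, one_mul]
  have hsubB1 : Finset.univ.biUnion (I 0) ⊆ B1 := by rw [hB1]
  have hsubB3 : Finset.univ.biUnion (I 2) ⊆ B3 := by rw [hB3]
  have hsubrest : Finset.univ.biUnion (I 1) ⊆ rest := by rw [← hB2]; exact hB2rest
  -- glue equality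
  have heqcore : ∀ x y z : (j : Fin J) → Fin (c j),
      ∑ α, π α * ((∏ j ∈ B1, p j α (x j)) * (∏ j ∈ rest, p j α (y j)) *
        (∏ j ∈ B3, p j α (z j)))
      = ∑ α, π' α * ((∏ j ∈ B1, p' j α (x j)) * (∏ j ∈ rest, p' j α (y j)) *
        (∏ j ∈ B3, p' j α (z j))) := by
    intro x y z
    have hg := hmix (fun j => if j ∈ B1 then x j else if j ∈ B3 then z j else y j)
    have hblocks : ∀ (q : (j : Fin J) → ((k : Fin K) → Fin (d k)) → Fin (c j) → ℝ)
        (α : (k : Fin K) → Fin (d k)),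
        ∏ j, q j α ((fun j => if j ∈ B1 then x j else if j ∈ B3 then z j else y j) j)
        = (∏ j ∈ B1, q j α (x j)) * (∏ j ∈ rest, q j α (y j)) * (∏ j ∈ B3, q j α (z j)) := by
      intro q α
      rw [hpart (fun j => q j α)]
      have e1 : ∏ j ∈ B1, q j α (if j ∈ B1 then x j else if j ∈ B3 then z j else y j)
          = ∏ j ∈ B1, q j α (x j) :=
        Finset.prod_congr rfl fun j hj => by rw [if_pos hj]
      have e2 : ∏ j ∈ rest, q j α (if j ∈ B1 then x j else if j ∈ B3 then z j else y j)
          = ∏ j ∈ rest, q j α (y j) := by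
        refine Finset.prod_congr rfl fun j hj => ?_
        rw [hrest, Finset.mem_compl, Finset.mem_union] at hj
        push_neg at hj
        rw [if_neg hj.1, if_neg hj.2]
      have e3 : ∏ j ∈ B3, q j α (if j ∈ B1 then x j else if j ∈ B3 then z j else y j)
          = ∏ j ∈ B3, q j α (z j) := by
        refine Finset.prod_congr rfl fun j hj => ?_
        rw [if_neg (Finset.disjoint_right.mp hd13 hj), if_pos hj]
      rw [e1, e2, e3]
    calc ∑ α, π α * ((∏ j ∈ B1, p j α (x j)) * (∏ j ∈ rest, p j α (y j)) *
          (∏ j ∈ B3, p j α (z j)))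
        = ∑ α, π α * ∏ j, p j α
            ((fun j => if j ∈ B1 then x j else if j ∈ B3 then z j else y j) j) :=
          Finset.sum_congr rfl fun α _ => by rw [hblocks p α]
      _ = ∑ α, π' α * ∏ j, p' j α
            ((fun j => if j ∈ B1 then x j else if j ∈ B3 then z j else y j) j) := hg
      _ = ∑ α, π' α * ((∏ j ∈ B1, p' j α (x j)) * (∏ j ∈ rest, p' j α (y j)) *
            (∏ j ∈ B3, p' j α (z j))) :=
          Finset.sum_congr rfl fun α _ => by rw [hblocks p' α]
  -- apply the core theorem
  obtain ⟨σ₁, hσ₁⟩ := core_three_view π π'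
    (fun (α : (k : Fin K) → Fin (d k)) (ω : (j : Fin J) → Fin (c j)) => ∏ j ∈ B1, p j α (ω j)) (fun (α : (k : Fin K) → Fin (d k)) (ω : (j : Fin J) → Fin (c j)) => ∏ j ∈ B1, p' j α (ω j))
    (fun (α : (k : Fin K) → Fin (d k)) (ω : (j : Fin J) → Fin (c j)) => ∏ j ∈ rest, p j α (ω j)) (fun (α : (k : Fin K) → Fin (d k)) (ω : (j : Fin J) → Fin (c j)) => ∏ j ∈ rest, p' j α (ω j))
    (fun (α : (k : Fin K) → Fin (d k)) (ω : (j : Fin J) → Fin (c j)) => ∏ j ∈ B3, p j α (ω j)) (fun (α : (k : Fin K) → Fin (d k)) (ω : (j : Fin J) → Fin (c j)) => ∏ j ∈ B3, p' j α (ω j))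
    (fun (γ : (k : Fin K) → Fin (d k)) (ω : (j : Fin J) → Fin (c j)) => (∏ j ∈ B1ᶜ, (c j:ℝ))⁻¹ * ∏ k, dual 0 k (γ k) (fun j : I 0 k => ω j.1))
    (fun (γ : (k : Fin K) → Fin (d k)) (ω : (j : Fin J) → Fin (c j)) => (∏ j ∈ restᶜ, (c j:ℝ))⁻¹ * ∏ k, dual 1 k (γ k) (fun j : I 1 k => ω j.1))
    (fun (γ : (k : Fin K) → Fin (d k)) (ω : (j : Fin J) → Fin (c j)) => (∏ j ∈ B3ᶜ, (c j:ℝ))⁻¹ * ∏ k, dual 2 k (γ k) (fun j : I 2 k => ω j.1))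
    (mk_pair 0 B1 hsubB1) (mk_pair 1 rest hsubrest) (mk_pair 2 B3 hsubB3)
    (∏ j ∈ B1ᶜ, (c j:ℝ)) (∏ j ∈ restᶜ, (c j:ℝ)) (∏ j ∈ B3ᶜ, (c j:ℝ))
    (hNpos B1ᶜ).ne' (hNpos restᶜ).ne' (hNpos B3ᶜ).ne'
    (fun α => hsum B1 (fun j => p j α) (fun j _ => hp1 j α))
    (fun α => hsum B1 (fun j => p' j α) (fun j _ => hp1' j α))
    (fun α => hsum rest (fun j => p j α) (fun j _ => hp1 j α))
    (fun α => hsum rest (fun j => p' j α) (fun j _ => hp1' j α))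
    (fun α => hsum B3 (fun j => p j α) (fun j _ => hp1 j α))
    (fun α => hsum B3 (fun j => p' j α) (fun j _ => hp1' j α))
    (fun α => (hC3 α).ne') heqcore
  -- full conditional distributions agree
  have hfull : ∀ (γ : (k : Fin K) → Fin (d k)) (ω : (j : Fin J) → Fin (c j)),
      ∏ j, p' j (σ₁ γ) (ω j) = ∏ j, p j γ (ω j) := by
    intro γ ω
    obtain ⟨hπσ, haσ, hbσ, hcσ⟩ := hσ₁ γ
    rw [hpart (fun j => p' j (σ₁ γ)) ω, hpart (fun j => p j γ) ω,
      congrFun haσ ω, congrFun hbσ ω, congrFun hcσ ω]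
  -- marginalization to single items
  have marg : ∀ (q : (j : Fin J) → Fin (c j) → ℝ), (∀ j, ∑ v, q j v = 1) →
      ∀ (j₀ : Fin J) (w : Fin (c j₀)),
      ∑ ω : (j : Fin J) → Fin (c j), (if ω j₀ = w then (1:ℝ) else 0) * ∏ j, q j (ω j)
        = q j₀ w := by
    intro q hq j₀ w
    set q' := Function.update q j₀ (fun v => if v = w then q j₀ v else 0) with hq'
    have h1 : ∀ ω : (j : Fin J) → Fin (c j),
        (if ω j₀ = w then (1:ℝ) else 0) * ∏ j, q j (ω j) = ∏ j, q' j (ω j) := by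
      intro ω
      have e : ∏ j ∈ Finset.univ.erase j₀, q' j (ω j)
          = ∏ j ∈ Finset.univ.erase j₀, q j (ω j) :=
        Finset.prod_congr rfl fun j hj => by
          rw [hq', Function.update_of_ne (Finset.ne_of_mem_erase hj)]
      calc (if ω j₀ = w then (1:ℝ) else 0) * ∏ j, q j (ω j)
          = (if ω j₀ = w then (1:ℝ) else 0) *
              (q j₀ (ω j₀) * ∏ j ∈ Finset.univ.erase j₀, q j (ω j)) :=
            congrArg _ (Finset.mul_prod_erase Finset.univ (fun j => q j (ω j))
              (Finset.mem_univ j₀)).symm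
        _ = q' j₀ (ω j₀) * ∏ j ∈ Finset.univ.erase j₀, q' j (ω j) := by
            rw [e, hq', Function.update_self]
            by_cases h : ω j₀ = w
            · rw [if_pos h, if_pos h, one_mul]
            · rw [if_neg h, if_neg h, zero_mul, zero_mul]
        _ = ∏ j, q' j (ω j) :=
            Finset.mul_prod_erase Finset.univ (fun j => q' j (ω j)) (Finset.mem_univ j₀)
    have hsp := sum_pi_prod c q'
    rw [Finset.sum_congr rfl fun ω _ => h1 ω, hsp,
      ← Finset.mul_prod_erase Finset.univ (fun j => ∑ v, q' j v) (Finset.mem_univ j₀)]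
    have h2 : ∑ v, q' j₀ v = q j₀ w := by
      rw [hq', Function.update_self]
      rw [Finset.sum_ite_eq' Finset.univ w (q j₀)]
      exact if_pos (Finset.mem_univ w)
    have h3 : ∏ j ∈ Finset.univ.erase j₀, (∑ v, q' j v) = 1 :=
      Finset.prod_eq_one fun j hj => by
        rw [hq', Function.update_of_ne (Finset.ne_of_mem_erase hj)]
        exact hq j
    rw [h2, h3, mul_one]
  refine ⟨σ₁, fun j₀ γ => funext fun w => ?_, fun γ => (hσ₁ γ).1⟩
  have m1 := marg (fun j => p' j (σ₁ γ)) (fun j => hp1' j (σ₁ γ)) j₀ w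
  have m2 := marg (fun j => p j γ) (fun j => hp1 j γ) j₀ w
  rw [← m1, ← m2]
  exact Finset.sum_congr rfl fun ω _ => by rw [hfull γ ω]
end

section
/- Consider a latent class model with M latent classes and J items, with true response probabilities p_{jα}^y for item j, class α, response value y ∈ {1,…,k_j}. For each item j define the partial-information equivalence relation: α₁ ≗_j α₂ iff p_{jα₁}^y = p_{jα₂}^y for every y. Let (p̂ⁿ)_{n≥1} be any sequence of arrays of estimated response probabilities satisfying max_{j,α,y} |p̂ⁿ_{jα}^y − p_{jα}^y| = o(n^{−1/4}) as n → ∞, and define the estimated relation at sample size n by α₁ ≈ⁿ_j α₂ iff Σ_{y=1}^{k_j} (p̂ⁿ_{jα₁}^y − p̂ⁿ_{jα₂}^y)² ≤ n^{−1/2}. Then there exists N such that for all n ≥ N and every item j and all classes α₁, α₂: α₁ ≈ⁿ_j α₂ if and only if α₁ ≗_j α₂; that is, the partial information structure of every item is exactly recovered for all sufficiently large n. -/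
set_option maxHeartbeats 1000000 in
/-- **Consistent recovery of the partial information structure (Theorem 5).**
There are `M` latent classes and `J` items with true response probabilities `p j α y`.
The partial-information equivalence of item `j` is `α₁ ≗_j α₂ ↔ ∀ y, p j α₁ y = p j α₂ y`.
Let `phat n` be any sequence of estimated response probability arrays whose maximal
estimation error is `o(n^{-1/4})` (i.e. `n^{1/4} · |phat n j α y − p j α y| → 0`
uniformly over the finitely many `j, α, y`), and declare `α₁ ≈ⁿ_j α₂` iff
`∑_y (phat n j α₁ y − phat n j α₂ y)² ≤ n^{-1/2}`. Then for all sufficiently large `n`,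
the estimated relation coincides with the true partial-information relation for every
item and every pair of classes. -/
theorem partial_information_structure_recovery
    (M J : ℕ) (c : Fin J → ℕ)
    (p : (j : Fin J) → Fin M → Fin (c j) → ℝ)
    (hp0 : ∀ j α y, 0 ≤ p j α y) (hp1 : ∀ j α, ∑ y, p j α y = 1)
    (phat : ℕ → (j : Fin J) → Fin M → Fin (c j) → ℝ)
    (hconv : ∀ ε > (0 : ℝ), ∃ N : ℕ, ∀ n ≥ N, ∀ (j : Fin J) (α : Fin M) (y : Fin (c j)),
      (n : ℝ) ^ ((1 : ℝ) / 4) * |phat n j α y - p j α y| < ε) :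
    ∃ N : ℕ, ∀ n ≥ N, ∀ (j : Fin J) (α₁ α₂ : Fin M),
      ((∑ y, (phat n j α₁ y - phat n j α₂ y) ^ 2) ≤ (n : ℝ) ^ (-(1 : ℝ) / 2) ↔
        ∀ y, p j α₁ y = p j α₂ y) := by
  classical
  set C : ℕ := Finset.univ.sup c + 1 with hCdef
  have hCR : (1:ℝ) ≤ (C:ℝ) := by exact_mod_cast Nat.succ_le_succ (Nat.zero_le _)
  have hCpos : (0:ℝ) < (C:ℝ) := lt_of_lt_of_le one_pos hCR
  have hcC : ∀ j : Fin J, (c j : ℝ) ≤ (C:ℝ) := by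
    intro j
    exact_mod_cast Nat.le_succ_of_le (Finset.le_sup (Finset.mem_univ j))
  set ε : ℝ := 1 / (4 * (C:ℝ)) with hεdef
  have hε : 0 < ε := by positivity
  have hεC : 4 * (C:ℝ) * ε ^ 2 ≤ 1/4 := by
    have h1 : 4 * (C:ℝ) * ε ^ 2 = 1 / (4*(C:ℝ)) := by
      rw [hεdef]; field_simp
    rw [h1, div_le_div_iff₀ (by positivity) (by norm_num)]
    nlinarith [hCR]
  set f : Fin J × Fin M × Fin M → ℝ :=
    fun s => ∑ y, (p s.1 s.2.1 y - p s.1 s.2.2 y)^2 with hfdef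
  set E : Finset (Fin J × Fin M × Fin M) :=
    Finset.univ.filter (fun s => ¬ ∀ y, p s.1 s.2.1 y = p s.1 s.2.2 y) with hEdef
  set δ : ℝ := if h : E.Nonempty then E.inf' h f else 1 with hδdef
  have hfpos : ∀ s ∈ E, 0 < f s := by
    intro s hs
    rw [hEdef, Finset.mem_filter] at hs
    push_neg at hs
    obtain ⟨y, hy⟩ := hs.2
    have h1 : 0 < (p s.1 s.2.1 y - p s.1 s.2.2 y)^2 := by
      have h2 := sub_ne_zero.mpr hy
      positivity
    calc (0:ℝ) < (p s.1 s.2.1 y - p s.1 s.2.2 y)^2 := h1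
      _ ≤ f s := Finset.single_le_sum (f := fun y => (p s.1 s.2.1 y - p s.1 s.2.2 y)^2)
          (fun y _ => sq_nonneg _) (Finset.mem_univ y)
  have hδpos : 0 < δ := by
    rw [hδdef]
    split_ifs with h
    · obtain ⟨s, hs, hse⟩ := Finset.exists_mem_eq_inf' h f
      rw [hse]; exact hfpos s hs
    · norm_num
  have hδle : ∀ s ∈ E, δ ≤ f s := by
    intro s hs
    rw [hδdef, dif_pos ⟨s, hs⟩]
    exact Finset.inf'_le f hs
  obtain ⟨N₀, hN₀⟩ := hconv ε hε
  set N₁ : ℕ := ⌈(4/δ)^2⌉₊ + 1 with hN₁def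
  refine ⟨max N₀ N₁, ?_⟩
  intro n hn j α₁ α₂
  have hnN₀ := le_trans (le_max_left _ _) hn
  have hnN₁ := le_trans (le_max_right _ _) hn
  have hn1 : 1 ≤ n := le_trans (Nat.le_add_left 1 _) hnN₁
  have hnR : (1:ℝ) ≤ (n:ℝ) := by exact_mod_cast hn1
  have hnpos : (0:ℝ) < (n:ℝ) := lt_of_lt_of_le one_pos hnR
  set q : ℝ := (n:ℝ) ^ ((1:ℝ)/4) with hqdef
  have hqpos : 0 < q := Real.rpow_pos_of_pos hnpos _
  set t : ℝ := (n:ℝ) ^ (-(1:ℝ)/2) with htdef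
  have htpos : 0 < t := Real.rpow_pos_of_pos hnpos _
  have hq2 : q^2 = (n:ℝ) ^ ((1:ℝ)/2) := by
    rw [hqdef, ← Real.rpow_natCast ((n:ℝ) ^ ((1:ℝ)/4)) 2, ← Real.rpow_mul hnpos.le]
    norm_num
  have hqt : t * q^2 = 1 := by
    rw [hq2, htdef, ← Real.rpow_add hnpos]
    norm_num
  have htδ : t < δ/4 := by
    have hb : (0:ℝ) < 4/δ := by positivity
    have h1 : (4/δ)^2 < (n:ℝ) := by
      calc (4/δ)^2 ≤ (⌈(4/δ)^2⌉₊ : ℝ) := Nat.le_ceil _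
        _ < (N₁ : ℝ) := by rw [hN₁def]; push_cast; linarith
        _ ≤ (n:ℝ) := by exact_mod_cast hnN₁
    have h2 : 4/δ < (n:ℝ) ^ ((1:ℝ)/2) := by
      calc 4/δ = ((4/δ)^2) ^ ((1:ℝ)/2) := by
            rw [← Real.rpow_natCast (4/δ) 2, ← Real.rpow_mul hb.le]
            norm_num
        _ < (n:ℝ) ^ ((1:ℝ)/2) := Real.rpow_lt_rpow (by positivity) h1 (by norm_num)
    have h3 : t = ((n:ℝ) ^ ((1:ℝ)/2))⁻¹ := by
      rw [htdef, neg_div, Real.rpow_neg hnpos.le]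
    have h4 : δ/4 = (4/δ)⁻¹ := by
      rw [inv_div]
    rw [h3, h4]
    exact inv_strictAnti₀ hb h2
  have herr : ∀ (jj : Fin J) (α : Fin M) (y : Fin (c jj)),
      |phat n jj α y - p jj α y| ≤ ε / q := by
    intro jj α y
    have h := hN₀ n hnN₀ jj α y
    exact ((lt_div_iff₀' hqpos).mpr h).le
  have habs : ∀ x z : ℝ, |x - z| ≤ |x| + |z| := by
    intro x z
    rw [sub_eq_add_neg]
    exact (abs_add_le _ _).trans (by rw [abs_neg])
  set e : Fin (c j) → ℝ :=
    fun y => (phat n j α₁ y - p j α₁ y) - (phat n j α₂ y - p j α₂ y) with hedef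
  clear_value e
  have hpair : ∀ y : Fin (c j), |e y| ≤ 2*ε/q := by
    intro y
    have h1 := herr j α₁ y
    have h2 := herr j α₂ y
    have h3 := habs (phat n j α₁ y - p j α₁ y) (phat n j α₂ y - p j α₂ y)
    have h4 : 2*ε/q = ε/q + ε/q := by ring
    rw [hedef, h4]
    exact h3.trans (add_le_add h1 h2)
  have hq2inv : t = (q^2)⁻¹ := eq_inv_of_mul_eq_one_left hqt
  have h4eq : (2*ε/q)^2 = 4*ε^2*t := by
    rw [hq2inv, div_pow]; ring
  have hsum_e : ∑ y, (e y)^2 ≤ t/4 := by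
    have hb : ∀ y ∈ (Finset.univ : Finset (Fin (c j))), (e y)^2 ≤ (2*ε/q)^2 := by
      intro y _
      have h1 := abs_le.mp (hpair y)
      exact sq_le_sq' h1.1 h1.2
    calc ∑ y, (e y)^2 ≤ (Finset.univ : Finset (Fin (c j))).card • ((2*ε/q)^2) :=
          Finset.sum_le_card_nsmul _ _ _ hb
      _ = (c j : ℝ) * (4*ε^2*t) := by
          rw [Finset.card_univ, Fintype.card_fin, nsmul_eq_mul, h4eq]
      _ ≤ (C:ℝ) * (4*ε^2*t) := by
          apply mul_le_mul_of_nonneg_right (hcC j)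
          positivity
      _ = (4*(C:ℝ)*ε^2) * t := by ring
      _ ≤ (1/4) * t := mul_le_mul_of_nonneg_right hεC htpos.le
      _ = t/4 := by ring
  constructor
  · intro hle
    by_contra hne
    have htE : (j, α₁, α₂) ∈ E := by
      rw [hEdef, Finset.mem_filter]
      exact ⟨Finset.mem_univ _, hne⟩
    have hδf : δ ≤ ∑ y, (p j α₁ y - p j α₂ y)^2 := hδle _ htE
    have hpt : ∀ y ∈ (Finset.univ : Finset (Fin (c j))),
        (p j α₁ y - p j α₂ y)^2/2 - (e y)^2 ≤ (phat n j α₁ y - phat n j α₂ y)^2 := by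
      intro y _
      have hde : phat n j α₁ y - phat n j α₂ y = (p j α₁ y - p j α₂ y) + e y := by
        rw [hedef]; ring
      rw [hde]
      have hkey : 2*((p j α₁ y - p j α₂ y) + e y)^2 + 2*(e y)^2 - (p j α₁ y - p j α₂ y)^2
          = ((p j α₁ y - p j α₂ y) + 2*e y)^2 := by ring
      have hnn := sq_nonneg ((p j α₁ y - p j α₂ y) + 2*e y)
      linarith
    have hsumpt := Finset.sum_le_sum hpt
    rw [Finset.sum_sub_distrib, ← Finset.sum_div] at hsumpt
    linarith
  · intro heq
    have hd : ∀ y : Fin (c j), phat n j α₁ y - phat n j α₂ y = e y := by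
      intro y
      rw [hedef]
      simp only []
      rw [heq y]
      ring
    calc ∑ y, (phat n j α₁ y - phat n j α₂ y)^2 = ∑ y, (e y)^2 := by
          apply Finset.sum_congr rfl
          intro y _
          rw [hd y]
      _ ≤ t/4 := hsum_e
      _ ≤ t := by linarith
end

section
/- Consider a latent class model with M latent classes, and let I be a nonempty subset of items such that: (i) for each item j ∈ I, the set {p_{jα} : α = 1,…,M} of conditional response distribution vectors contains exactly two distinct elements; and (ii) for every pair of distinct classes α₁ ≠ α₂ there exists an item j ∈ I with p_{jα₁} ≠ p_{jα₂}. Then the T-matrix T_I has full column rank M; that is, its M columns are linearly independent vectors in ℝ^{Π_{j∈I} k_j}. -/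
/-!
Two distinct probability vectors are linearly independent (both have coordinate sum one), so
for each item `j ∈ I` and class `α` there is a functional `φ_{jα}` equal to `1` on `p_{jα}` and
`0` on the other value of `p_j`. Pairing the `β`-th column of `T_I` with the tensor product
`⊗_j φ_{jα}` gives `∏_j [p_{jβ} = p_{jα}]`, which by separation is `1` if `β = α` and `0`
otherwise. So the columns admit a biorthogonal family of functionals and are independent.
-/

open Matrix

lemma exists_dotProduct_eq_one_and_eq_zero {K ι : Type*} [Field K] [Fintype ι] {a b : ι → K}
    (hab : a ≠ b) (ha : ∑ i, a i = 1) (hb : ∑ i, b i = 1) :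
    ∃ φ : ι → K, φ ⬝ᵥ a = 1 ∧ φ ⬝ᵥ b = 0 := by
  classical
  obtain ⟨i, hi⟩ := Function.ne_iff.mp hab
  have hD : a i - b i ≠ 0 := sub_ne_zero.mpr hi
  -- `v ↦ (v i - b i * ∑ v) / (a i - b i)` vanishes at `b` and is `1` at `a`.
  refine ⟨(a i - b i)⁻¹ • (Pi.single i 1 - b i • 1), ?_, ?_⟩
  · rw [smul_dotProduct, sub_dotProduct, smul_dotProduct, single_dotProduct, one_dotProduct, ha]
    simp [hD]
  · rw [smul_dotProduct, sub_dotProduct, smul_dotProduct, single_dotProduct, one_dotProduct, hb]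
    simp

lemma exists_dotProduct_eq_ite_of_ncard_range_eq_two {K ι κ : Type*} [Field K] [DecidableEq K]
    [Fintype ι] {f : κ → ι → K} (hf : (Set.range f).ncard = 2) (hsum : ∀ k, ∑ i, f k i = 1)
    (k₀ : κ) : ∃ φ : ι → K, ∀ k, φ ⬝ᵥ f k = if f k = f k₀ then 1 else 0 := by
  obtain ⟨k₁, hk₁, hrange⟩ : ∃ k₁, f k₁ ≠ f k₀ ∧ ∀ k, f k = f k₀ ∨ f k = f k₁ := by
    obtain ⟨u, w, huw, hS⟩ := Set.ncard_eq_two.mp hf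
    have hmem : ∀ k, f k = u ∨ f k = w := fun k => by
      simpa [hS] using Set.mem_range_self (f := f) k
    obtain ⟨ku, hku⟩ : u ∈ Set.range f := hS ▸ by simp
    obtain ⟨kw, hkw⟩ : w ∈ Set.range f := hS ▸ by simp
    rcases hmem k₀ with h₀ | h₀
    · exact ⟨kw, by rw [hkw, h₀]; exact huw.symm, fun k => by rw [h₀, hkw]; exact hmem k⟩
    · exact ⟨ku, by rw [hku, h₀]; exact huw, fun k => by rw [h₀, hku]; exact (hmem k).symm⟩
  obtain ⟨φ, h₀, h₁⟩ := exists_dotProduct_eq_one_and_eq_zero hk₁.symm (hsum k₀) (hsum k₁)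
  refine ⟨φ, fun k => ?_⟩
  rcases hrange k with hk | hk <;> simp [hk, h₀, h₁, hk₁]

lemma dotProduct_prod_eq_prod_dotProduct {R ι : Type*} [CommSemiring R] [Fintype ι]
    [DecidableEq ι] {κ : ι → Type*} [∀ i, Fintype (κ i)] (φ v : (i : ι) → κ i → R) :
    (fun y : (i : ι) → κ i => ∏ i, φ i (y i)) ⬝ᵥ (fun y => ∏ i, v i (y i))
      = ∏ i, φ i ⬝ᵥ v i := by
  simp only [dotProduct, ← Finset.prod_mul_distrib, Fintype.prod_sum]

theorem Tmatrix_full_column_rank_of_two_valued_items_general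
    (M J : ℕ) (c : Fin J → ℕ)
    (p : (j : Fin J) → Fin M → Fin (c j) → ℝ)
    (hp1 : ∀ j α, ∑ y, p j α y = 1)
    (I : Finset (Fin J))
    (htwo : ∀ j ∈ I, (Set.range (fun α : Fin M => p j α)).ncard = 2)
    (hsep : ∀ α₁ α₂ : Fin M, α₁ ≠ α₂ → ∃ j ∈ I, p j α₁ ≠ p j α₂) :
    LinearIndependent ℝ
      (fun α : Fin M =>
        (fun y : ((j : I) → Fin (c j.1)) => ∏ j, p j.1 α (y j))) := by
  choose φ hφ using fun (j : I) (α : Fin M) =>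
    exists_dotProduct_eq_ite_of_ncard_range_eq_two (htwo j j.2) (hp1 j) α
  have hpair : ∀ α β : Fin M,
      (fun y : (j : I) → Fin (c j.1) => ∏ j, φ j α (y j)) ⬝ᵥ (fun y => ∏ j, p j.1 β (y j))
        = ∏ j : I, if p j β = p j α then 1 else 0 := fun α β => by
    rw [dotProduct_prod_eq_prod_dotProduct]
    exact Finset.prod_congr rfl fun j _ => hφ j α β
  refine .of_pairwise_dual_eq_zero_one _
    (fun α => dotProductBilin ℝ ℝ (fun y => ∏ j, φ j α (y j))) (fun α β hαβ => ?_) fun α => ?_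
  · obtain ⟨j, hj, hne⟩ := hsep β α hαβ.symm
    rw [dotProductBilin_apply_apply, hpair]
    exact Finset.prod_eq_zero (Finset.mem_univ ⟨j, hj⟩) (if_neg hne)
  · rw [dotProductBilin_apply_apply, hpair]
    exact Finset.prod_eq_one fun j _ => if_pos rfl

/-- **Full column rank of the T-matrix of a set of two-valued items.**
There are `M` latent classes; item `j` takes values in `{1,…,c j}` with conditional
response distribution `p j α` (a probability vector) for class `α`. Let `I` be a nonempty
subset of the items such that (i) for each `j ∈ I` the set `{p j α : α}` has exactly two
distinct elements, and (ii) for every pair of distinct classes some item `j ∈ I`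
separates them (`p j α₁ ≠ p j α₂`). Then the T-matrix `T_I` — rows indexed by response
patterns on `I`, columns indexed by classes, entry `∏_{j ∈ I} p_{jα}^{y^j}` — has full
column rank `M`: its `M` columns are linearly independent. -/
theorem Tmatrix_full_column_rank_of_two_valued_items
    (M J : ℕ) (c : Fin J → ℕ)
    (p : (j : Fin J) → Fin M → Fin (c j) → ℝ)
    (hp0 : ∀ j α y, 0 ≤ p j α y) (hp1 : ∀ j α, ∑ y, p j α y = 1)
    (I : Finset (Fin J)) (hI : I.Nonempty)
    (htwo : ∀ j ∈ I, (Set.range (fun α : Fin M => p j α)).ncard = 2)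
    (hsep : ∀ α₁ α₂ : Fin M, α₁ ≠ α₂ → ∃ j ∈ I, p j α₁ ≠ p j α₂) :
    LinearIndependent ℝ
      (fun α : Fin M =>
        (fun y : ((j : I) → Fin (c j.1)) => ∏ j, p j.1 α (y j))) :=
  Tmatrix_full_column_rank_of_two_valued_items_general M J c p hp1 I htwo hsep
end

section
/- Let M ≥ 2. Let T₁ ∈ ℝ^{m×M}, T₂ ∈ ℝ^{n×M}, T₃ ∈ ℝ^{p×M} be matrices of full column rank M whose columns each sum to 1, and let Λ = diag(π₁,…,π_M) with π_α > 0 for all α. Let T₁' ∈ ℝ^{m×M}, T₂' ∈ ℝ^{n×M}, T₃' ∈ ℝ^{p×M} be matrices whose columns each sum to 1, and let Λ' = diag(π₁',…,π_M'). If the triple products are equal, [T₁Λ, T₂, T₃] = [T₁'Λ', T₂', T₃'], then there exists an M×M permutation matrix P such that T₁ = T₁'P, T₂ = T₂'P, T₃ = T₃'P, and Λ = PᵀΛ'P. -/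
/-! With `A = T₁Λ`, summing the slices of `[A, T₂, T₃] = [A', T₂', T₃']` over the third index
(the columns of `T₃`, `T₃'` sum to one) gives `A T₂ᵀ = A' T₂'ᵀ`. Left inverses of `A` and `T₂`
then produce an invertible `F` with `T₂ = T₂' Fᵀ`, `A = A' F⁻¹`, and the slices become
`diag(T₃ k) F = F diag(T₃' k)`. So `F α β ≠ 0` forces column `α` of `T₃` to equal column `β`
of `T₃'`; as the columns of `T₃` are distinct, `F` is a scaled permutation matrix, and the column
sums of `T₂`, `T₂'` make the scaling trivial. Column sums of `T₁`, `T₁'` finally separate `T₁`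
from `Λ`. -/

open Matrix Equiv Function

namespace Matrix

variable {ι κ m n p R K : Type*}

def tripleProduct [Fintype ι] [CommSemiring R] (A : Matrix m ι R) (B : Matrix n ι R)
    (C : Matrix p ι R) : m → n → p → R :=
  fun i j k => ∑ α, A i α * B j α * C k α

theorem sum_diagonal_eq_one [DecidableEq ι] [Fintype p] [AddCommMonoidWithOne R]
    {C : Matrix p ι R} (hC : ∀ α, ∑ k, C k α = 1) : ∑ k, diagonal (C k) = 1 := by
  rw [← diagonal_one]
  ext α β
  rcases eq_or_ne α β with rfl | hne
  · simp [Matrix.sum_apply, hC]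
  · simp [Matrix.sum_apply, diagonal_apply_ne _ hne]

section TripleProduct

variable [Fintype ι] [DecidableEq ι] [CommSemiring R]
  {A A' : Matrix m ι R} {B B' : Matrix n ι R} {C C' : Matrix p ι R}

theorem mul_diagonal_mul_transpose_eq_of_tripleProduct_eq
    (h : tripleProduct A B C = tripleProduct A' B' C') (k : p) :
    A * diagonal (C k) * Bᵀ = A' * diagonal (C' k) * B'ᵀ := by
  ext i j
  rw [mul_apply, mul_apply]
  simp only [mul_diagonal, transpose_apply, mul_right_comm _ (C k _), mul_right_comm _ (C' k _)]
  exact congrFun (congrFun (congrFun h i) j) k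

theorem mul_transpose_eq_of_tripleProduct_eq [Fintype p]
    (h : tripleProduct A B C = tripleProduct A' B' C')
    (hC : ∀ α, ∑ k, C k α = 1) (hC' : ∀ α, ∑ k, C' k α = 1) :
    A * Bᵀ = A' * B'ᵀ := by
  have hsum := Finset.sum_congr rfl fun k (_ : k ∈ Finset.univ) =>
    mul_diagonal_mul_transpose_eq_of_tripleProduct_eq h k
  rwa [← Matrix.sum_mul, ← Matrix.sum_mul, ← Matrix.mul_sum, ← Matrix.mul_sum,
    sum_diagonal_eq_one hC, sum_diagonal_eq_one hC', Matrix.mul_one, Matrix.mul_one] at hsum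

end TripleProduct

theorem mulVec_one_eq_one_of_eq_mul_transpose [Fintype ι] [Fintype n] [CommSemiring R]
    {B B' : Matrix n ι R} {F : Matrix ι ι R} (hB : ∀ α, ∑ j, B j α = 1)
    (hB' : ∀ α, ∑ j, B' j α = 1) (h : B = B' * Fᵀ) : F *ᵥ 1 = 1 := by
  have one_vecMul : ∀ X : Matrix n ι R, (∀ α, ∑ j, X j α = 1) → 1 ᵥ* X = 1 :=
    fun X hX => funext fun α => by simp [vecMul, dotProduct, hX]
  calc F *ᵥ 1 = (1 ᵥ* B') ᵥ* Fᵀ := by rw [one_vecMul B' hB', vecMul_transpose]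
    _ = 1 := by rw [vecMul_vecMul, ← h, one_vecMul B hB]

section CommRing

variable [Fintype ι] [DecidableEq ι] [CommRing R]

theorem exists_intertwiner_of_mul_mul_transpose_eq [Fintype m] [Fintype n]
    {A A' : Matrix m ι R} {B B' : Matrix n ι R}
    {LA : Matrix ι m R} {LB : Matrix ι n R} (hLA : LA * A = 1) (hLB : LB * B = 1)
    (hAB : A * Bᵀ = A' * B'ᵀ) {D D' : κ → Matrix ι ι R}
    (hD : ∀ k, A * D k * Bᵀ = A' * D' k * B'ᵀ) :
    ∃ F G : Matrix ι ι R, F * G = 1 ∧ A = A' * G ∧ B = B' * Fᵀ ∧ ∀ k, D k * F = F * D' k := by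
  set F := LA * A'
  set G := (LB * B')ᵀ
  have hcancel : ∀ X : Matrix ι ι R, LA * (A * X * Bᵀ) * LBᵀ = X := fun X => by
    rw [Matrix.mul_assoc A, ← Matrix.mul_assoc LA, hLA, Matrix.one_mul, Matrix.mul_assoc,
      ← transpose_mul, hLB, transpose_one, Matrix.mul_one]
  have hFG : F * G = 1 := calc
    F * G = LA * (A' * B'ᵀ) * LBᵀ := by simp only [F, G, transpose_mul, Matrix.mul_assoc]
    _ = 1 := by
      rw [← hAB, ← Matrix.mul_assoc, hLA, Matrix.one_mul, ← transpose_mul, hLB, transpose_one]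
  have hA : A = A' * G := calc
    A = A * (LB * B)ᵀ := by rw [hLB, transpose_one, Matrix.mul_one]
    _ = A' * G := by rw [transpose_mul, ← Matrix.mul_assoc, hAB, Matrix.mul_assoc, ← transpose_mul]
  have hBt : Bᵀ = F * B'ᵀ := calc
    Bᵀ = LA * A * Bᵀ := by rw [hLA, Matrix.one_mul]
    _ = F * B'ᵀ := by rw [Matrix.mul_assoc, hAB, ← Matrix.mul_assoc]
  refine ⟨F, G, hFG, hA, by simpa using congrArg transpose hBt, fun k => ?_⟩
  calc D k * F = LA * (A * D k * Bᵀ) * LBᵀ * F := by rw [hcancel]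
    _ = F * D' k * (G * F) := by simp only [hD k, F, G, transpose_mul, Matrix.mul_assoc]
    _ = F * D' k := by rw [mul_eq_one_comm.mp hFG, Matrix.mul_one]

theorem exists_perm_ne_zero_iff_of_mul_eq_one [Nontrivial R] {F G : Matrix ι ι R}
    (hFG : F * G = 1) (hcol : ∀ α α' β, F α β ≠ 0 → F α' β ≠ 0 → α = α') :
    ∃ σ : Perm ι, ∀ α β, F α β ≠ 0 ↔ α = σ β := by
  have hcol_ne : ∀ β, ∃ α, F α β ≠ 0 := fun β => by
    have : (G * F) β β ≠ 0 := by simp [mul_eq_one_comm.mp hFG]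
    obtain ⟨α, -, hα⟩ := Finset.exists_ne_zero_of_sum_ne_zero this
    exact ⟨α, right_ne_zero_of_mul hα⟩
  choose r hr using hcol_ne
  have hr_surj : Surjective r := fun α => by
    have : (F * G) α α ≠ 0 := by simp [hFG]
    obtain ⟨β, -, hβ⟩ := Finset.exists_ne_zero_of_sum_ne_zero this
    exact ⟨β, (hcol _ _ _ (left_ne_zero_of_mul hβ) (hr β)).symm⟩
  exact ⟨Equiv.ofBijective r (Finite.surjective_iff_bijective.mp hr_surj),
    fun α β => ⟨fun h => hcol _ _ _ h (hr β), fun h => h ▸ hr β⟩⟩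

theorem eq_transpose_permMatrix_of_ne_zero_iff {F : Matrix ι ι R} {σ : Perm ι}
    (hσ : ∀ α β, F α β ≠ 0 ↔ α = σ β) (hrow : F *ᵥ 1 = 1) : F = (σ.permMatrix R)ᵀ := by
  have hzero : ∀ α β, β ≠ σ.symm α → F α β = 0 := fun α β hβ =>
    not_not.mp fun h => hβ (by rw [(hσ α β).mp h, σ.symm_apply_apply])
  ext α β
  rw [PEquiv.transpose_toMatrix_toPEquiv_apply]
  rcases eq_or_ne β (σ.symm α) with rfl | hβ
  · have hα := congrFun hrow α
    rw [mulVec, dotProduct, Finset.sum_eq_single (σ.symm α)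
      (fun β _ hβ => by rw [hzero α β hβ, zero_mul]) (by simp)] at hα
    simpa using hα
  · rw [Pi.single_eq_of_ne hβ, hzero α β hβ]

variable [IsDomain R]

theorem eq_of_diagonal_mul_eq_mul_diagonal {F : Matrix ι ι R} {d d' : ι → R}
    (h : diagonal d * F = F * diagonal d') {α β : ι} (hF : F α β ≠ 0) : d α = d' β := by
  have hαβ := congrFun (congrFun h α) β
  rw [diagonal_mul, mul_diagonal, mul_comm (F α β)] at hαβ
  exact mul_right_cancel₀ hF hαβ

theorem eq_and_eq_of_mul_diagonal_eq [Fintype m] {X Y : Matrix m ι R} {d e : ι → R}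
    (hX : ∀ α, ∑ i, X i α = 1) (hY : ∀ α, ∑ i, Y i α = 1) (hd : ∀ α, d α ≠ 0)
    (h : X * diagonal d = Y * diagonal e) : X = Y ∧ d = e := by
  have hde : d = e := funext fun α => by
    simpa [mul_diagonal, ← Finset.sum_mul, hX, hY] using congrArg (fun Z => ∑ i, Z i α) h
  subst hde
  refine ⟨ext fun i α => mul_right_cancel₀ (hd α) ?_, rfl⟩
  simpa [mul_diagonal] using congrFun (congrFun h i) α

end CommRing

section Field

variable [Fintype ι] [DecidableEq ι] [Field K]

theorem exists_mul_eq_one_of_linearIndependent_col [Fintype m] {A : Matrix m ι K}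
    (hA : LinearIndependent K A.col) : ∃ L : Matrix ι m K, L * A = 1 := by
  classical
  obtain ⟨g, hg⟩ := (toLin' A).exists_leftInverse_of_injective
    (LinearMap.ker_eq_bot.mpr (mulVec_injective_iff.mpr hA))
  refine ⟨LinearMap.toMatrix' g, ?_⟩
  simpa only [LinearMap.toMatrix'_comp, LinearMap.toMatrix'_toLin', LinearMap.toMatrix'_id] using
    congrArg LinearMap.toMatrix' hg

theorem linearIndependent_col_mul_diagonal {A : Matrix m ι K} {d : ι → K}
    (hA : LinearIndependent K A.col) (hd : ∀ α, d α ≠ 0) :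
    LinearIndependent K (A * diagonal d).col := by
  convert hA.units_smul fun α => Units.mk0 (d α) (hd α) using 1
  ext α i
  rw [col_apply, mul_diagonal]
  exact mul_comm (A i α) (d α)

theorem exists_perm_of_tripleProduct_eq [Fintype m] [Fintype n] [Fintype p]
    {A A' : Matrix m ι K} {B B' : Matrix n ι K} {C C' : Matrix p ι K}
    (hA : LinearIndependent K A.col) (hB : LinearIndependent K B.col) (hC : Injective C.col)
    (hB₁ : ∀ α, ∑ j, B j α = 1) (hB₁' : ∀ α, ∑ j, B' j α = 1)
    (hC₁ : ∀ α, ∑ k, C k α = 1) (hC₁' : ∀ α, ∑ k, C' k α = 1)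
    (h : tripleProduct A B C = tripleProduct A' B' C') :
    ∃ σ : Perm ι, A = A' * σ.permMatrix K ∧ B = B' * σ.permMatrix K ∧
      C = C' * σ.permMatrix K := by
  obtain ⟨LA, hLA⟩ := exists_mul_eq_one_of_linearIndependent_col hA
  obtain ⟨LB, hLB⟩ := exists_mul_eq_one_of_linearIndependent_col hB
  obtain ⟨F, G, hFG, hA_eq, hB_eq, hcomm⟩ := exists_intertwiner_of_mul_mul_transpose_eq hLA hLB
    (mul_transpose_eq_of_tripleProduct_eq h hC₁ hC₁')
    (mul_diagonal_mul_transpose_eq_of_tripleProduct_eq h)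
  have hC_eq : ∀ k α β, F α β ≠ 0 → C k α = C' k β := fun k _ _ =>
    eq_of_diagonal_mul_eq_mul_diagonal (hcomm k)
  obtain ⟨σ, hσ⟩ := exists_perm_ne_zero_iff_of_mul_eq_one hFG fun α α' β hα hα' =>
    hC (funext fun k => (hC_eq k α β hα).trans (hC_eq k α' β hα').symm)
  have hF : F = (σ.permMatrix K)ᵀ := eq_transpose_permMatrix_of_ne_zero_iff hσ
    (mulVec_one_eq_one_of_eq_mul_transpose hB₁ hB₁' hB_eq)
  have hG : G = σ.permMatrix K := by
    refine (left_inv_eq_right_inv ?_ (hF ▸ hFG)).symm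
    rw [transpose_permMatrix, ← permMatrix_mul, inv_mul_cancel, permMatrix_one]
  refine ⟨σ, by rw [hA_eq, hG], by rw [hB_eq, hF, transpose_transpose], ?_⟩
  ext k γ
  rw [PEquiv.mul_toMatrix_toPEquiv, submatrix_apply, id]
  exact hC_eq k γ (σ.symm γ) ((hσ _ _).mpr (σ.apply_symm_apply γ).symm)

end Field

end Matrix

theorem triple_product_decomposition_uniqueness_general
    (M m n p : ℕ)
    (T₁ : Matrix (Fin m) (Fin M) ℝ) (T₂ : Matrix (Fin n) (Fin M) ℝ)
    (T₃ : Matrix (Fin p) (Fin M) ℝ)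
    (h₁ : LinearIndependent ℝ (fun α : Fin M => fun i : Fin m => T₁ i α))
    (h₂ : LinearIndependent ℝ (fun α : Fin M => fun j : Fin n => T₂ j α))
    (h₃ : LinearIndependent ℝ (fun α : Fin M => fun k : Fin p => T₃ k α))
    (hs₁ : ∀ α, ∑ i, T₁ i α = 1) (hs₂ : ∀ α, ∑ j, T₂ j α = 1)
    (hs₃ : ∀ α, ∑ k, T₃ k α = 1)
    (π : Fin M → ℝ) (hπ : ∀ α, 0 < π α)
    (T₁' : Matrix (Fin m) (Fin M) ℝ) (T₂' : Matrix (Fin n) (Fin M) ℝ)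
    (T₃' : Matrix (Fin p) (Fin M) ℝ)
    (hs₁' : ∀ α, ∑ i, T₁' i α = 1) (hs₂' : ∀ α, ∑ j, T₂' j α = 1)
    (hs₃' : ∀ α, ∑ k, T₃' k α = 1)
    (π' : Fin M → ℝ)
    (heq : ∀ (i : Fin m) (j : Fin n) (k : Fin p),
      ∑ α, T₁ i α * π α * T₂ j α * T₃ k α =
      ∑ α, T₁' i α * π' α * T₂' j α * T₃' k α) :
    ∃ P : Matrix (Fin M) (Fin M) ℝ,
      (∃ σ : Equiv.Perm (Fin M),
        P = Matrix.of fun i j => if σ i = j then (1 : ℝ) else 0) ∧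
      T₁ = T₁' * P ∧ T₂ = T₂' * P ∧ T₃ = T₃' * P ∧
      Matrix.diagonal π = P.transpose * Matrix.diagonal π' * P := by
  have hπ₀ : ∀ α, π α ≠ 0 := fun α => (hπ α).ne'
  have hprod :
      tripleProduct (T₁ * diagonal π) T₂ T₃ = tripleProduct (T₁' * diagonal π') T₂' T₃' := by
    ext i j k
    simpa only [tripleProduct, mul_diagonal] using heq i j k
  obtain ⟨σ, hA, hT₂, hT₃⟩ := exists_perm_of_tripleProduct_eq
    (linearIndependent_col_mul_diagonal h₁ hπ₀) h₂ h₃.injective hs₂ hs₂' hs₃ hs₃' hprod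
  set P := σ.permMatrix ℝ
  have hA' : T₁ * diagonal π = T₁' * P * diagonal (π' ∘ σ.symm) := by
    rw [hA]
    ext i γ
    simp [P, mul_diagonal, PEquiv.mul_toMatrix_toPEquiv]
  obtain ⟨hT₁, hππ'⟩ := eq_and_eq_of_mul_diagonal_eq hs₁
    (fun γ => by simp [P, PEquiv.mul_toMatrix_toPEquiv, hs₁']) hπ₀ hA'
  refine ⟨P, ⟨σ, ?_⟩, hT₁, hT₂, hT₃, ?_⟩
  · ext i j
    simp [P, PEquiv.toMatrix_apply]
  · rw [hππ']
    simp [P, PEquiv.mul_toMatrix_toPEquiv, PEquiv.toMatrix_toPEquiv_mul]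

/-- **Uniqueness of the triple-product decomposition with stochastic factors.**
Let `M ≥ 2`, let `T₁, T₂, T₃` be real matrices with `M` columns of full column rank whose
columns each sum to `1`, and let `Λ = diag(π)` with `π α > 0` for all `α`. Let
`T₁', T₂', T₃'` be matrices of the same sizes whose columns each sum to `1`, and
`Λ' = diag(π')`. If the triple products are equal, `[T₁Λ, T₂, T₃] = [T₁'Λ', T₂', T₃']`
(entrywise `∑ α, T₁ i α * π α * T₂ j α * T₃ k α = ∑ α, T₁' i α * π' α * T₂' j α * T₃' k α`),
then there is an `M×M` permutation matrix `P` with `T₁ = T₁'P`, `T₂ = T₂'P`, `T₃ = T₃'P`,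
and `Λ = P.transpose Λ' P`. -/
theorem triple_product_decomposition_uniqueness
    (M m n p : ℕ) (hM : 2 ≤ M)
    (T₁ : Matrix (Fin m) (Fin M) ℝ) (T₂ : Matrix (Fin n) (Fin M) ℝ)
    (T₃ : Matrix (Fin p) (Fin M) ℝ)
    (h₁ : LinearIndependent ℝ (fun α : Fin M => fun i : Fin m => T₁ i α))
    (h₂ : LinearIndependent ℝ (fun α : Fin M => fun j : Fin n => T₂ j α))
    (h₃ : LinearIndependent ℝ (fun α : Fin M => fun k : Fin p => T₃ k α))
    (hs₁ : ∀ α, ∑ i, T₁ i α = 1) (hs₂ : ∀ α, ∑ j, T₂ j α = 1)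
    (hs₃ : ∀ α, ∑ k, T₃ k α = 1)
    (π : Fin M → ℝ) (hπ : ∀ α, 0 < π α)
    (T₁' : Matrix (Fin m) (Fin M) ℝ) (T₂' : Matrix (Fin n) (Fin M) ℝ)
    (T₃' : Matrix (Fin p) (Fin M) ℝ)
    (hs₁' : ∀ α, ∑ i, T₁' i α = 1) (hs₂' : ∀ α, ∑ j, T₂' j α = 1)
    (hs₃' : ∀ α, ∑ k, T₃' k α = 1)
    (π' : Fin M → ℝ)
    (heq : ∀ (i : Fin m) (j : Fin n) (k : Fin p),
      ∑ α, T₁ i α * π α * T₂ j α * T₃ k α =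
      ∑ α, T₁' i α * π' α * T₂' j α * T₃' k α) :
    ∃ P : Matrix (Fin M) (Fin M) ℝ,
      (∃ σ : Equiv.Perm (Fin M),
        P = Matrix.of fun i j => if σ i = j then (1 : ℝ) else 0) ∧
      T₁ = T₁' * P ∧ T₂ = T₂' * P ∧ T₃ = T₃' * P ∧
      Matrix.diagonal π = P.transpose * Matrix.diagonal π' * P :=
  triple_product_decomposition_uniqueness_general M m n p T₁ T₂ T₃ h₁ h₂ h₃ hs₁ hs₂ hs₃ π hπ T₁' T₂'
    T₃' hs₁' hs₂' hs₃' π' heq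
end
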